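/- arXiv:2408.10273 — 5 statements merged into one kernel-verified Lean document; each statement's English description precedes it below -/
import Mathlib

section
/- Let G₁ and G₂ be finite simple graphs, let x₁,…,x_k be distinct vertices of G₁ and y₁,…,y_k be distinct vertices of G₂, and assume there is no pair of indices i ≠ j such that x_i is adjacent to x_j in G₁ and simultaneously y_i is adjacent to y_j in G₂. Let G₁ # G₂ denote the connected sum: the graph obtained from the disjoint union of G₁ and G₂ by identifying x_i with y_i for each 1 ≤ i ≤ k, whose edge set is the union of the edge sets of G₁ and G₂. Then M(G₁ # G₂) = Σ_{S ⊆ {1,…,k}} M(G₁ − {x_i : i ∈ S}) · M(G₂ − {y_i : i ∉ S}), where for a graph H and a vertex subset T, H − T denotes the induced subgraph of H on the complement of T. -/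
noncomputable def numPM {V : Type*} (G : SimpleGraph V) : ℕ :=
  Set.ncard {E' : Set (Sym2 V) | E' ⊆ G.edgeSet ∧ ∀ v : V, ∃! e ∈ E', v ∈ e}

namespace ConnSumAux

open Function Set

variable {V W : Type*}

lemma sym2_map_pair_mem {f : V → W} {s : Set (Sym2 V)} {a b : W} :
    s(a, b) ∈ Sym2.map f '' s ↔ ∃ u v, s(u, v) ∈ s ∧ f u = a ∧ f v = b := by
  constructor
  · rintro ⟨e, he, hm⟩
    revert he hm
    induction e using Sym2.ind with
    | _ u v =>
      intro he hm
      rw [Sym2.map_pair_eq, Sym2.eq_iff] at hm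
      rcases hm with ⟨h1, h2⟩ | ⟨h1, h2⟩
      · exact ⟨u, v, he, h1, h2⟩
      · exact ⟨v, u, by rwa [Sym2.eq_swap], h2, h1⟩
  · rintro ⟨u, v, h, rfl, rfl⟩
    exact ⟨s(u, v), h, Sym2.map_pair_eq ..⟩

lemma lift_sym2 {T : Set V} :
    ∀ e : Sym2 V, (∀ v ∈ e, v ∉ T) →
      ∃ e' : Sym2 {v : V | v ∉ T}, Sym2.map Subtype.val e' = e := by
  intro e
  induction e using Sym2.ind with
  | _ a b =>
    intro h
    exact ⟨s(⟨a, h a (Sym2.mem_mk_left a b)⟩, ⟨b, h b (Sym2.mem_mk_right a b)⟩),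
      Sym2.map_pair_eq ..⟩

lemma mem_map_val {s : Set V} (e' : Sym2 s) (v : s) :
    (v : V) ∈ Sym2.map Subtype.val e' ↔ v ∈ e' := by
  rw [Sym2.mem_map]
  constructor
  · rintro ⟨a, ha, h⟩
    rwa [show a = v from Subtype.ext h] at ha
  · intro h; exact ⟨v, h, rfl⟩

lemma edge_map_mem {G : SimpleGraph V} {s : Set V} :
    ∀ e' : Sym2 s, Sym2.map Subtype.val e' ∈ G.edgeSet ↔ e' ∈ (G.induce s).edgeSet := by
  intro e'
  induction e' using Sym2.ind with
  | _ a b =>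
    rw [Sym2.map_pair_eq]
    simp [SimpleGraph.mem_edgeSet]

lemma ncard_prod' {α β : Type*} (s : Set α) (t : Set β) :
    (s ×ˢ t).ncard = s.ncard * t.ncard := by
  rw [← Nat.card_coe_set_eq, ← Nat.card_coe_set_eq, ← Nat.card_coe_set_eq,
    Nat.card_congr (Equiv.Set.prod s t), Nat.card_prod]

lemma nat_card_sigma {ι : Type*} [Fintype ι] (f : ι → Type*) [h : ∀ i, Finite (f i)] :
    Nat.card (Σ i, f i) = ∑ i, Nat.card (f i) := by
  letI : ∀ i, Fintype (f i) := fun i => Fintype.ofFinite _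
  simp [Nat.card_eq_fintype_card, Fintype.card_sigma]

def fiberEquiv {α β : Type*} (f : α → β) (p : α → Prop) :
    {a // p a} ≃ Σ b : β, {a // p a ∧ f a = b} where
  toFun a := ⟨f a.1, a.1, a.2, rfl⟩
  invFun x := ⟨x.2.1, x.2.2.1⟩
  left_inv a := rfl
  right_inv := by rintro ⟨b, a, ha, rfl⟩; rfl

lemma ncard_restrict (G : SimpleGraph V) (T : Set V) :
    Set.ncard {A : Set (Sym2 V) | A ⊆ G.edgeSet ∧ (∀ e ∈ A, ∀ v ∈ e, v ∉ T) ∧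
      ∀ v, v ∉ T → ∃! e, e ∈ A ∧ v ∈ e} = numPM (G.induce {v | v ∉ T}) := by
  classical
  set s : Set V := {v : V | v ∉ T} with hs
  have hval : Function.Injective (Subtype.val : s → V) := Subtype.val_injective
  have hF : Function.Injective (Sym2.map (Subtype.val : s → V)) := Sym2.map.injective hval
  have him : {A : Set (Sym2 V) | A ⊆ G.edgeSet ∧ (∀ e ∈ A, ∀ v ∈ e, v ∉ T) ∧
      ∀ v, v ∉ T → ∃! e, e ∈ A ∧ v ∈ e} =
      (Set.image (Sym2.map (Subtype.val : s → V))) ''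
        {E' : Set (Sym2 s) | E' ⊆ (G.induce s).edgeSet ∧ ∀ v : s, ∃! e, e ∈ E' ∧ v ∈ e} := by
    ext A
    constructor
    · rintro ⟨hsub, havoid, hcov⟩
      refine ⟨Sym2.map Subtype.val ⁻¹' A, ⟨?_, ?_⟩, ?_⟩
      · intro e' he'
        exact (edge_map_mem e').mp (hsub he')
      · intro v
        obtain ⟨e, ⟨heA, hve⟩, huniq⟩ := hcov v.1 v.2
        obtain ⟨e', rfl⟩ := lift_sym2 e (havoid e heA)
        refine ⟨e', ⟨heA, (mem_map_val e' v).mp hve⟩, ?_⟩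
        rintro e'' ⟨he'', hv''⟩
        exact hF (huniq _ ⟨he'', (mem_map_val e'' v).mpr hv''⟩)
      · apply Set.Subset.antisymm
        · rintro e ⟨e', he', rfl⟩
          exact he'
        · intro e he
          obtain ⟨e', rfl⟩ := lift_sym2 e (havoid e he)
          exact ⟨e', he, rfl⟩
    · rintro ⟨B, ⟨hBsub, hBcov⟩, rfl⟩
      refine ⟨?_, ?_, ?_⟩
      · rintro e ⟨e', he', rfl⟩
        exact (edge_map_mem e').mpr (hBsub he')
      · rintro e ⟨e', he', rfl⟩ v hv
        obtain ⟨a, _, rfl⟩ := Sym2.mem_map.mp hv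
        exact a.2
      · intro v hv
        obtain ⟨e', ⟨he'B, hv'⟩, huniq⟩ := hBcov ⟨v, hv⟩
        refine ⟨Sym2.map Subtype.val e', ⟨⟨e', he'B, rfl⟩, (mem_map_val e' ⟨v, hv⟩).mpr hv'⟩, ?_⟩
        rintro e ⟨⟨e'', he''B, rfl⟩, hve⟩
        rw [huniq e'' ⟨he''B, (mem_map_val e'' ⟨v, hv⟩).mp hve⟩]
  rw [him, Set.ncard_image_of_injective _ (Set.image_injective.mpr hF)]
  rfl

end ConnSumAux
/-- **Theorem (connected sum of matchings).**
Let `G₁`, `G₂` be finite simple graphs with distinguished distinct vertices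
`x 0, …, x (k-1)` and `y 0, …, y (k-1)` respectively, such that no pair of indices
`i ≠ j` has `x i ~ x j` in `G₁` and simultaneously `y i ~ y j` in `G₂`.
Let `G` (on vertex type `W`) be the connected sum `G₁ # G₂`, i.e. the graph obtained
from the disjoint union by identifying `x i` with `y i` for each `i`, with edge set
the union of the two edge sets.  Then
`M(G₁ # G₂) = Σ_{S ⊆ Fin k} M(G₁ − x '' S) · M(G₂ − y '' Sᶜ)`. -/
theorem connected_sum_matching
    {V₁ V₂ W : Type*} [Fintype V₁] [Fintype V₂]
    {k : ℕ} (G₁ : SimpleGraph V₁) (G₂ : SimpleGraph V₂)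
    (x : Fin k → V₁) (y : Fin k → V₂)
    (hx : Function.Injective x) (hy : Function.Injective y)
    (hnodouble : ¬ ∃ i j : Fin k, i ≠ j ∧ G₁.Adj (x i) (x j) ∧ G₂.Adj (y i) (y j))
    (f₁ : V₁ → W) (f₂ : V₂ → W)
    (hf₁ : Function.Injective f₁) (hf₂ : Function.Injective f₂)
    (hcover : ∀ w : W, (∃ v, f₁ v = w) ∨ (∃ v, f₂ v = w))
    (hglue : ∀ v₁ v₂, f₁ v₁ = f₂ v₂ ↔ ∃ i, v₁ = x i ∧ v₂ = y i)
    (G : SimpleGraph W)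
    (hadj : ∀ a b, G.Adj a b ↔
      (∃ u v, G₁.Adj u v ∧ f₁ u = a ∧ f₁ v = b) ∨
      (∃ u v, G₂.Adj u v ∧ f₂ u = a ∧ f₂ v = b)) :
    numPM G = ∑ S : Finset (Fin k),
      numPM (G₁.induce {v | v ∉ x '' ↑S}) *
      numPM (G₂.induce {v | v ∉ y '' ↑(Sᶜ)}) := by
  classical
  haveI hWfin : Finite W := Finite.of_surjective (Sum.elim f₁ f₂) (fun w => by
    rcases hcover w with ⟨v, hv⟩ | ⟨v, hv⟩
    exacts [⟨Sum.inl v, hv⟩, ⟨Sum.inr v, hv⟩])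
  set F₁ : Sym2 V₁ → Sym2 W := Sym2.map f₁ with hF₁def
  set F₂ : Sym2 V₂ → Sym2 W := Sym2.map f₂ with hF₂def
  have hF₁ : Function.Injective F₁ := Sym2.map.injective hf₁
  have hF₂ : Function.Injective F₂ := Sym2.map.injective hf₂
  -- edge decomposition
  have hedge : G.edgeSet = F₁ '' G₁.edgeSet ∪ F₂ '' G₂.edgeSet := by
    ext e
    induction e using Sym2.ind with
    | _ a b =>
      rw [SimpleGraph.mem_edgeSet, hadj, Set.mem_union, hF₁def, hF₂def,
        ConnSumAux.sym2_map_pair_mem, ConnSumAux.sym2_map_pair_mem]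
      simp only [SimpleGraph.mem_edgeSet]
  -- the images of the two edge sets are disjoint
  have hdisj : ∀ e₁ : Sym2 V₁, e₁ ∈ G₁.edgeSet → ∀ e₂ : Sym2 V₂, e₂ ∈ G₂.edgeSet →
      F₁ e₁ ≠ F₂ e₂ := by
    intro e₁
    induction e₁ using Sym2.ind with
    | _ u v =>
      intro he₁ e₂
      induction e₂ using Sym2.ind with
      | _ a b =>
        intro he₂ hcontra
        rw [SimpleGraph.mem_edgeSet] at he₁ he₂
        rw [hF₁def, hF₂def, Sym2.map_pair_eq, Sym2.map_pair_eq, Sym2.eq_iff] at hcontra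
        apply hnodouble
        rcases hcontra with ⟨h1, h2⟩ | ⟨h1, h2⟩
        · obtain ⟨i, rfl, rfl⟩ := (hglue u a).mp h1
          obtain ⟨j, rfl, rfl⟩ := (hglue v b).mp h2
          exact ⟨i, j, fun h => he₁.ne (by rw [h]), he₁, he₂⟩
        · obtain ⟨i, rfl, rfl⟩ := (hglue u b).mp h1
          obtain ⟨j, rfl, rfl⟩ := (hglue v a).mp h2
          exact ⟨i, j, fun h => he₁.ne (by rw [h]), he₁, he₂.symm⟩
  set M : Set (Set (Sym2 W)) := {E' | E' ⊆ G.edgeSet ∧ ∀ w : W, ∃! e, e ∈ E' ∧ w ∈ e}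
    with hMdef
  set φ : Set (Sym2 W) → Finset (Fin k) := fun E' =>
    Finset.univ.filter (fun i => ∃ e₂ ∈ G₂.edgeSet, F₂ e₂ ∈ E' ∧ y i ∈ e₂) with hφdef
  have hφmem : ∀ (E' : Set (Sym2 W)) (i : Fin k),
      i ∈ φ E' ↔ ∃ e₂ ∈ G₂.edgeSet, F₂ e₂ ∈ E' ∧ y i ∈ e₂ := by
    intro E' i
    rw [hφdef]
    simp only [Finset.mem_filter, Finset.mem_univ, true_and]
  set P₁ : Finset (Fin k) → Set (Set (Sym2 V₁)) := fun S =>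
    {A | A ⊆ G₁.edgeSet ∧ (∀ e ∈ A, ∀ v ∈ e, v ∉ x '' ↑S) ∧
      ∀ v, v ∉ x '' ↑S → ∃! e, e ∈ A ∧ v ∈ e} with hP₁def
  set P₂ : Finset (Fin k) → Set (Set (Sym2 V₂)) := fun S =>
    {A | A ⊆ G₂.edgeSet ∧ (∀ e ∈ A, ∀ v ∈ e, v ∉ y '' ↑(Sᶜ)) ∧
      ∀ v, v ∉ y '' ↑(Sᶜ) → ∃! e, e ∈ A ∧ v ∈ e} with hP₂def
  set Ψ : Set (Sym2 V₁) × Set (Sym2 V₂) → Set (Sym2 W) :=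
    fun p => F₁ '' p.1 ∪ F₂ '' p.2 with hΨdef
  -- small membership helpers
  have hxS : ∀ (S : Finset (Fin k)) (i : Fin k), x i ∈ x '' (↑S : Set (Fin k)) ↔ i ∈ S := by
    intro S i
    constructor
    · rintro ⟨j, hj, hji⟩
      rwa [← hx hji]
    · intro h
      exact ⟨i, h, rfl⟩
  have hyC : ∀ (S : Finset (Fin k)) (i : Fin k),
      y i ∈ y '' (↑(Sᶜ) : Set (Fin k)) ↔ i ∉ S := by
    intro S i
    constructor
    · rintro ⟨j, hj, hji⟩
      have := hy hji
      subst this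
      exact Finset.mem_compl.mp hj
    · intro h
      exact ⟨i, Finset.mem_coe.mpr (Finset.mem_compl.mpr h), rfl⟩
  -- injectivity of the gluing on pairs of admissible matchings
  have hinj : ∀ S : Finset (Fin k), Set.InjOn Ψ ((P₁ S) ×ˢ (P₂ S)) := by
    intro S p hp q hq h
    rw [Set.mem_prod] at hp hq
    rw [hΨdef] at h
    have hsep : ∀ (A₁ B₁ : Set (Sym2 V₁)) (A₂ B₂ : Set (Sym2 V₂)),
        A₁ ⊆ G₁.edgeSet → B₂ ⊆ G₂.edgeSet →
        F₁ '' A₁ ∪ F₂ '' A₂ = F₁ '' B₁ ∪ F₂ '' B₂ → A₁ ⊆ B₁ := by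
      intro A₁ B₁ A₂ B₂ hA₁ hB₂ heq e he
      have hmem : F₁ e ∈ F₁ '' B₁ ∪ F₂ '' B₂ := heq ▸ Or.inl ⟨e, he, rfl⟩
      rcases hmem with ⟨e', he', h'⟩ | ⟨e', he', h'⟩
      · rwa [← hF₁ h']
      · exact absurd h'.symm (hdisj e (hA₁ he) e' (hB₂ he'))
    have hsep' : ∀ (A₁ B₁ : Set (Sym2 V₁)) (A₂ B₂ : Set (Sym2 V₂)),
        A₂ ⊆ G₂.edgeSet → B₁ ⊆ G₁.edgeSet →
        F₁ '' A₁ ∪ F₂ '' A₂ = F₁ '' B₁ ∪ F₂ '' B₂ → A₂ ⊆ B₂ := by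
      intro A₁ B₁ A₂ B₂ hA₂ hB₁ heq e he
      have hmem : F₂ e ∈ F₁ '' B₁ ∪ F₂ '' B₂ := heq ▸ Or.inr ⟨e, he, rfl⟩
      rcases hmem with ⟨e', he', h'⟩ | ⟨e', he', h'⟩
      · exact absurd h' (hdisj e' (hB₁ he') e (hA₂ he))
      · rwa [← hF₂ h']
    have h1 : p.1 = q.1 :=
      Set.Subset.antisymm (hsep p.1 q.1 p.2 q.2 hp.1.1 hq.2.1 h)
        (hsep q.1 p.1 q.2 p.2 hq.1.1 hp.2.1 h.symm)
    have h2 : p.2 = q.2 :=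
      Set.Subset.antisymm (hsep' p.1 q.1 p.2 q.2 hp.2.1 hq.1.1 h)
        (hsep' q.1 p.1 q.2 p.2 hq.2.1 hp.1.1 h.symm)
    exact Prod.ext h1 h2
  -- the main fiber description
  have hfiber : ∀ S : Finset (Fin k),
      {E' | E' ∈ M ∧ φ E' = S} = Ψ '' ((P₁ S) ×ˢ (P₂ S)) := by
    intro S
    ext E'
    simp only [Set.mem_setOf_eq, Set.mem_image, Set.mem_prod]
    constructor
    · rintro ⟨⟨hsub, hcov⟩, hφS⟩
      have hφiff : ∀ i : Fin k, i ∈ S ↔ ∃ e₂ ∈ G₂.edgeSet, F₂ e₂ ∈ E' ∧ y i ∈ e₂ := by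
        intro i
        rw [← hφS, hφmem]
      refine ⟨({e | e ∈ G₁.edgeSet ∧ F₁ e ∈ E'}, {e | e ∈ G₂.edgeSet ∧ F₂ e ∈ E'}),
        ⟨⟨fun e he => he.1, ?_, ?_⟩, ⟨fun e he => he.1, ?_, ?_⟩⟩, ?_⟩
      · -- A₁ avoids x '' S
        rintro e ⟨heE, heM⟩ v hv ⟨i, hiS, rfl⟩
        obtain ⟨e₂, he₂E, he₂M, hyie₂⟩ := (hφiff i).mp (Finset.mem_coe.mp hiS)
        have hw : f₁ (x i) = f₂ (y i) := (hglue (x i) (y i)).mpr ⟨i, rfl, rfl⟩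
        obtain ⟨e₀, _, huniq⟩ := hcov (f₁ (x i))
        have h1 : F₁ e = e₀ := huniq (F₁ e) ⟨heM, Sym2.mem_map.mpr ⟨x i, hv, rfl⟩⟩
        have h2 : F₂ e₂ = e₀ := huniq (F₂ e₂) ⟨he₂M, by
          rw [hw]; exact Sym2.mem_map.mpr ⟨y i, hyie₂, rfl⟩⟩
        exact hdisj e heE e₂ he₂E (h1.trans h2.symm)
      · -- A₁ covers the complement of x '' S
        intro v hvS
        obtain ⟨e₀, ⟨he₀M, hwe₀⟩, huniq⟩ := hcov (f₁ v)
        have he₀G := hsub he₀M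
        rw [hedge] at he₀G
        rcases he₀G with ⟨e₁, he₁E, rfl⟩ | ⟨e₂, he₂E, rfl⟩
        · obtain ⟨u, hue₁, hu⟩ := Sym2.mem_map.mp hwe₀
          have huv := hf₁ hu
          subst huv
          refine ⟨e₁, ⟨⟨he₁E, he₀M⟩, hue₁⟩, ?_⟩
          rintro e' ⟨⟨he'E, he'M⟩, hve'⟩
          exact hF₁ (huniq (F₁ e') ⟨he'M, Sym2.mem_map.mpr ⟨u, hve', rfl⟩⟩)
        · obtain ⟨u, hue₂, hu⟩ := Sym2.mem_map.mp hwe₀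
          obtain ⟨i, rfl, rfl⟩ := (hglue v u).mp hu.symm
          have hiS : i ∈ S := (hφiff i).mpr ⟨e₂, he₂E, he₀M, hue₂⟩
          exact absurd ⟨i, Finset.mem_coe.mpr hiS, rfl⟩ hvS
      · -- A₂ avoids y '' Sᶜ
        rintro e ⟨heE, heM⟩ u hu huC
        obtain ⟨i, hiC, rfl⟩ := huC
        have : i ∈ S := (hφiff i).mpr ⟨e, heE, heM, hu⟩
        exact Finset.mem_compl.mp (Finset.mem_coe.mp hiC) this
      · -- A₂ covers the complement of y '' Sᶜ
        intro u huC
        obtain ⟨e₀, ⟨he₀M, hwe₀⟩, huniq⟩ := hcov (f₂ u)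
        have he₀G := hsub he₀M
        rw [hedge] at he₀G
        rcases he₀G with ⟨e₁, he₁E, rfl⟩ | ⟨e₂, he₂E, rfl⟩
        · obtain ⟨v, hve₁, hv⟩ := Sym2.mem_map.mp hwe₀
          obtain ⟨i, rfl, rfl⟩ := (hglue v u).mp hv
          have hiS : i ∈ S := by
            by_contra hiS
            exact huC ((hyC S i).mpr hiS)
          obtain ⟨e₂', he₂'E, he₂'M, hye₂'⟩ := (hφiff i).mp hiS
          have hw : f₁ (x i) = f₂ (y i) := (hglue (x i) (y i)).mpr ⟨i, rfl, rfl⟩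
          have h2 : F₂ e₂' = F₁ e₁ := huniq (F₂ e₂')
            ⟨he₂'M, Sym2.mem_map.mpr ⟨y i, hye₂', (hw.symm : f₂ (y i) = _) ▸ rfl⟩⟩
          exact absurd h2.symm (hdisj e₁ he₁E e₂' he₂'E)
        · obtain ⟨u', hue₂, hu'⟩ := Sym2.mem_map.mp hwe₀
          have huu := hf₂ hu'
          subst huu
          refine ⟨e₂, ⟨⟨he₂E, he₀M⟩, hue₂⟩, ?_⟩
          rintro e' ⟨⟨he'E, he'M⟩, hue'⟩
          exact hF₂ (huniq (F₂ e') ⟨he'M, Sym2.mem_map.mpr ⟨u', hue', rfl⟩⟩)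
      · -- the union of the two parts is E'
        rw [hΨdef]
        apply Set.Subset.antisymm
        · rintro e (⟨e₁, he₁, rfl⟩ | ⟨e₂, he₂, rfl⟩)
          exacts [he₁.2, he₂.2]
        · intro e heM
          have heG := hsub heM
          rw [hedge] at heG
          rcases heG with ⟨e₁, he₁E, rfl⟩ | ⟨e₂, he₂E, rfl⟩
          · exact Or.inl ⟨e₁, ⟨he₁E, heM⟩, rfl⟩
          · exact Or.inr ⟨e₂, ⟨he₂E, heM⟩, rfl⟩
    · rintro ⟨⟨A₁, A₂⟩, ⟨hA₁, hA₂⟩, rfl⟩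
      obtain ⟨hsub₁, havoid₁, hcov₁⟩ := hA₁
      obtain ⟨hsub₂, havoid₂, hcov₂⟩ := hA₂
      have hΨval : Ψ (A₁, A₂) = F₁ '' A₁ ∪ F₂ '' A₂ := by rw [hΨdef]
      rw [hΨval]
      have claim₁ : ∀ v : V₁, v ∉ x '' (↑S : Set (Fin k)) →
          ∃! e, e ∈ F₁ '' A₁ ∪ F₂ '' A₂ ∧ f₁ v ∈ e := by
        intro v hvS
        obtain ⟨e₁, ⟨he₁A, hve₁⟩, huniq⟩ := hcov₁ v hvS
        refine ⟨F₁ e₁, ⟨Or.inl ⟨e₁, he₁A, rfl⟩, Sym2.mem_map.mpr ⟨v, hve₁, rfl⟩⟩, ?_⟩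
        rintro e ⟨⟨e₁', he₁', rfl⟩ | ⟨e₂', he₂', rfl⟩, hve⟩
        · obtain ⟨u, hu, huv⟩ := Sym2.mem_map.mp hve
          rw [huniq e₁' ⟨he₁', by rwa [hf₁ huv] at hu⟩]
        · obtain ⟨u, hu, huv⟩ := Sym2.mem_map.mp hve
          obtain ⟨i, rfl, rfl⟩ := (hglue v u).mp huv.symm
          have hiC : i ∉ S := fun hiS => hvS ⟨i, Finset.mem_coe.mpr hiS, rfl⟩
          exact absurd ((hyC S i).mpr hiC) (havoid₂ e₂' he₂' (y i) hu)
      have claim₂ : ∀ u : V₂, u ∉ y '' (↑(Sᶜ) : Set (Fin k)) →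
          ∃! e, e ∈ F₁ '' A₁ ∪ F₂ '' A₂ ∧ f₂ u ∈ e := by
        intro u huC
        obtain ⟨e₂, ⟨he₂A, hue₂⟩, huniq⟩ := hcov₂ u huC
        refine ⟨F₂ e₂, ⟨Or.inr ⟨e₂, he₂A, rfl⟩, Sym2.mem_map.mpr ⟨u, hue₂, rfl⟩⟩, ?_⟩
        rintro e ⟨⟨e₁', he₁', rfl⟩ | ⟨e₂', he₂', rfl⟩, hue⟩
        · obtain ⟨v, hv, hvu⟩ := Sym2.mem_map.mp hue
          obtain ⟨i, rfl, rfl⟩ := (hglue v u).mp hvu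
          have hiS : i ∈ S := by
            by_contra hiS
            exact huC ((hyC S i).mpr hiS)
          exact absurd ⟨i, Finset.mem_coe.mpr hiS, rfl⟩ (havoid₁ e₁' he₁' (x i) hv)
        · obtain ⟨u', hu', huu⟩ := Sym2.mem_map.mp hue
          rw [huniq e₂' ⟨he₂', by rwa [hf₂ huu] at hu'⟩]
      constructor
      · constructor
        · rintro e (⟨e₁, he₁, rfl⟩ | ⟨e₂, he₂, rfl⟩)
          · rw [hedge]; exact Or.inl ⟨e₁, hsub₁ he₁, rfl⟩
          · rw [hedge]; exact Or.inr ⟨e₂, hsub₂ he₂, rfl⟩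
        · intro w
          rcases hcover w with ⟨v, rfl⟩ | ⟨u, rfl⟩
          · by_cases hv : v ∈ x '' (↑S : Set (Fin k))
            · obtain ⟨i, hiS, rfl⟩ := hv
              rw [(hglue (x i) (y i)).mpr ⟨i, rfl, rfl⟩]
              exact claim₂ (y i) (fun h => (hyC S i).mp h (Finset.mem_coe.mp hiS))
            · exact claim₁ v hv
          · by_cases hu : u ∈ y '' (↑(Sᶜ) : Set (Fin k))
            · obtain ⟨i, hiC, rfl⟩ := hu
              rw [← (hglue (x i) (y i)).mpr ⟨i, rfl, rfl⟩]
              refine claim₁ (x i) ?_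
              rintro ⟨j, hjS, hji⟩
              have := hx hji
              subst this
              exact Finset.mem_compl.mp (Finset.mem_coe.mp hiC) (Finset.mem_coe.mp hjS)
            · exact claim₂ u hu
      · apply Finset.ext
        intro i
        rw [hφmem]
        constructor
        · rintro ⟨e₂, he₂E, he₂M, hyi⟩
          rcases he₂M with ⟨e₁', he₁', heq⟩ | ⟨e₂', he₂', heq⟩
          · exact absurd heq (hdisj e₁' (hsub₁ he₁') e₂ he₂E)
          · rw [← hF₂ heq] at hyi
            by_contra hiS
            exact havoid₂ e₂' he₂' (y i) hyi ((hyC S i).mpr hiS)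
        · intro hiS
          have hyiC : y i ∉ y '' (↑(Sᶜ) : Set (Fin k)) := fun h => (hyC S i).mp h hiS
          obtain ⟨e₂, ⟨he₂A, hyi⟩, _⟩ := hcov₂ (y i) hyiC
          exact ⟨e₂, hsub₂ he₂A, Or.inr ⟨e₂, he₂A, rfl⟩, hyi⟩
  -- assemble the count
  have step1 : numPM G = Nat.card M := (Nat.card_coe_set_eq M).symm
  have step2 : Nat.card M =
      Nat.card (Σ S : Finset (Fin k), {E' // E' ∈ M ∧ φ E' = S}) :=
    Nat.card_congr (ConnSumAux.fiberEquiv φ (· ∈ M))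
  have step3 : Nat.card (Σ S : Finset (Fin k), {E' // E' ∈ M ∧ φ E' = S}) =
      ∑ S : Finset (Fin k), Nat.card {E' // E' ∈ M ∧ φ E' = S} :=
    ConnSumAux.nat_card_sigma _
  rw [step1, step2, step3]
  refine Finset.sum_congr rfl (fun S _ => ?_)
  have e1 : Nat.card {E' // E' ∈ M ∧ φ E' = S} = ({E' | E' ∈ M ∧ φ E' = S}).ncard :=
    Nat.card_coe_set_eq _
  rw [e1, hfiber S, Set.ncard_image_of_injOn (hinj S), ConnSumAux.ncard_prod',
    hP₁def, hP₂def, ConnSumAux.ncard_restrict, ConnSumAux.ncard_restrict]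
end

section
/- Let G₁ be a finite simple graph with distinguished distinct vertices x₁,…,x_{i+j} and G₂ a finite simple graph with distinguished distinct vertices w₁,…,w_{j+k}. Form the glued graph G from the disjoint union of G₁ and G₂ by identifying x_{i+t} with w_t for each 1 ≤ t ≤ j (edge set the union of the two edge sets), and assume no pair of identified vertices is joined by an edge in both G₁ and G₂. Write J for the set of the j identified (glued) vertices of G. Then for every subset D₁ of {x₁,…,x_i}, every subset D₂ of {w_{j+1},…,w_{j+k}}, and every subset T of J: M(G − (D₁ ∪ D₂ ∪ T)) = Σ_{S ⊆ J∖T} M(G₁ − (D₁ ∪ T₁ ∪ S₁)) · M(G₂ − (D₂ ∪ T₂ ∪ ((J∖T)∖S)₂)), where for a set U ⊆ J of glued vertices, U₁ and U₂ denote the corresponding sets of vertices {x_{i+t}} in G₁ and {w_t} in G₂ respectively, and H − T denotes the induced subgraph on the complement of T. -/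
def pmOn {V : Type*} (G : SimpleGraph V) (A : Set V) : Set (Set (Sym2 V)) :=
  {E' | E' ⊆ G.edgeSet ∧ (∀ e ∈ E', ∀ v ∈ e, v ∈ A) ∧ ∀ v ∈ A, ∃! e, e ∈ E' ∧ v ∈ e}

lemma numPM_induce {V : Type*} (G : SimpleGraph V) (A : Set V) :
    numPM (G.induce A) = (pmOn G A).ncard := by
  classical
  have hι : Function.Injective (Subtype.val : A → V) := Subtype.val_injective
  have hmap : Function.Injective (Sym2.map (Subtype.val : A → V)) := Sym2.map.injective hι
  have himg : (fun E' : Set (Sym2 A) => Sym2.map (Subtype.val : A → V) '' E') ''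
      {E' | E' ⊆ (G.induce A).edgeSet ∧ ∀ v, ∃! e, e ∈ E' ∧ v ∈ e} = pmOn G A := by
    apply Set.Subset.antisymm
    · rintro _ ⟨E', ⟨hsub, hcov⟩, rfl⟩
      refine ⟨?_, ?_, ?_⟩
      · rintro _ ⟨e, he, rfl⟩
        induction e using Sym2.ind with
        | _ u v =>
          have h : (G.induce A).Adj u v := hsub he
          simpa [Sym2.map_pair_eq] using (h : G.Adj u.1 v.1)
      · rintro _ ⟨e, he, rfl⟩ a ha
        induction e using Sym2.ind with
        | _ u v =>
          rw [Sym2.map_pair_eq, Sym2.mem_iff] at ha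
          rcases ha with rfl | rfl
          exacts [u.2, v.2]
      · intro a ha
        obtain ⟨e, ⟨heE, heA⟩, huniq⟩ := hcov ⟨a, ha⟩
        refine ⟨Sym2.map Subtype.val e, ⟨⟨e, heE, rfl⟩, ?_⟩, ?_⟩
        · exact Sym2.mem_map.2 ⟨⟨a, ha⟩, heA, rfl⟩
        · rintro _ ⟨⟨e', he'E, rfl⟩, ha'⟩
          obtain ⟨u, hu, huv⟩ := Sym2.mem_map.1 ha'
          have : u = ⟨a, ha⟩ := Subtype.ext huv
          subst this
          rw [huniq e' ⟨he'E, hu⟩]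
    · rintro F ⟨hsub, hsupp, hcov⟩
      refine ⟨{e : Sym2 A | Sym2.map (Subtype.val : A → V) e ∈ F}, ⟨?_, ?_⟩, ?_⟩
      · intro e he
        induction e using Sym2.ind with
        | _ u v =>
          have := hsub he
          rw [Sym2.map_pair_eq, SimpleGraph.mem_edgeSet] at this
          exact this
      · intro v
        obtain ⟨f, ⟨hfF, hvf⟩, huniq⟩ := hcov v.1 v.2
        induction f using Sym2.ind with
        | _ a b =>
          have haA : a ∈ A := hsupp _ hfF a (Sym2.mem_mk_left a b)
          have hbA : b ∈ A := hsupp _ hfF b (Sym2.mem_mk_right a b)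
          refine ⟨s(⟨a, haA⟩, ⟨b, hbA⟩), ⟨?_, ?_⟩, ?_⟩
          · simpa [Sym2.map_pair_eq] using hfF
          · rw [Sym2.mem_iff] at hvf ⊢
            rcases hvf with rfl | rfl
            · exact Or.inl rfl
            · exact Or.inr rfl
          · rintro e' ⟨he'F, hve'⟩
            apply hmap
            rw [Sym2.map_pair_eq]
            refine huniq _ ⟨he'F, ?_⟩
            exact Sym2.mem_map.2 ⟨v, hve', rfl⟩
      · apply Set.Subset.antisymm
        · rintro _ ⟨e, he, rfl⟩; exact he
        · intro f hf
          induction f using Sym2.ind with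
          | _ a b =>
            have haA : a ∈ A := hsupp _ hf a (Sym2.mem_mk_left a b)
            have hbA : b ∈ A := hsupp _ hf b (Sym2.mem_mk_right a b)
            exact ⟨s(⟨a, haA⟩, ⟨b, hbA⟩), by simpa [Sym2.map_pair_eq] using hf, by
              rw [Sym2.map_pair_eq]⟩
  rw [numPM, ← himg, Set.ncard_image_of_injective _ (Set.image_injective.2 hmap)]

def spl {U W : Type*} (H : SimpleGraph U) (f : U → W) (F : Set (Sym2 W)) : Set (Sym2 U) :=
  {e | e ∈ H.edgeSet ∧ Sym2.map f e ∈ F}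

def comb {V₁ V₂ W : Type*} (f₁ : V₁ → W) (f₂ : V₂ → W)
    (E₁ : Set (Sym2 V₁)) (E₂ : Set (Sym2 V₂)) : Set (Sym2 W) :=
  Sym2.map f₁ '' E₁ ∪ Sym2.map f₂ '' E₂

open Classical in
noncomputable def sigIdx {V₂ W : Type*} {j k : ℕ}
    (G₂ : SimpleGraph V₂) (w : Fin j ⊕ Fin k → V₂) (f₂ : V₂ → W)
    (T : Finset (Fin j)) (F : Set (Sym2 W)) : Finset (Fin j) :=
  (Finset.univ \ T).filter (fun t => ∃ e ∈ spl G₂ f₂ F, w (Sum.inl t) ∈ e)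

lemma mem_sigIdx {V₂ W : Type*} {j k : ℕ} (G₂ : SimpleGraph V₂) (w : Fin j ⊕ Fin k → V₂)
    (f₂ : V₂ → W) (T : Finset (Fin j)) (F : Set (Sym2 W)) (t : Fin j) :
    t ∈ sigIdx G₂ w f₂ T F ↔ t ∈ Finset.univ \ T ∧ ∃ e ∈ spl G₂ f₂ F, w (Sum.inl t) ∈ e := by
  classical
  exact Finset.mem_filter

lemma sigIdx_subset {V₂ W : Type*} {j k : ℕ} (G₂ : SimpleGraph V₂) (w : Fin j ⊕ Fin k → V₂)
    (f₂ : V₂ → W) (T : Finset (Fin j)) (F : Set (Sym2 W)) :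
    sigIdx G₂ w f₂ T F ⊆ Finset.univ \ T := by
  classical
  exact Finset.filter_subset _ _

lemma key {V₁ V₂ W : Type*} [Fintype V₁] [Fintype V₂]
    {i j k : ℕ} (G₁ : SimpleGraph V₁) (G₂ : SimpleGraph V₂)
    (x : Fin i ⊕ Fin j → V₁) (w : Fin j ⊕ Fin k → V₂)
    (hx : Function.Injective x) (hw : Function.Injective w)
    (hnodouble : ¬ ∃ t t' : Fin j, t ≠ t' ∧
      G₁.Adj (x (Sum.inr t)) (x (Sum.inr t')) ∧ G₂.Adj (w (Sum.inl t)) (w (Sum.inl t')))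
    (f₁ : V₁ → W) (f₂ : V₂ → W)
    (hf₁ : Function.Injective f₁) (hf₂ : Function.Injective f₂)
    (hcover : ∀ u : W, (∃ v, f₁ v = u) ∨ (∃ v, f₂ v = u))
    (hglue : ∀ v₁ v₂, f₁ v₁ = f₂ v₂ ↔ ∃ t : Fin j, v₁ = x (Sum.inr t) ∧ v₂ = w (Sum.inl t))
    (G : SimpleGraph W)
    (hadj : ∀ a b, G.Adj a b ↔
      (∃ u v, G₁.Adj u v ∧ f₁ u = a ∧ f₁ v = b) ∨
      (∃ u v, G₂.Adj u v ∧ f₂ u = a ∧ f₂ v = b))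
    (D₁ : Finset (Fin i)) (D₂ : Finset (Fin k)) (T : Finset (Fin j)) :
    (pmOn G {v |
        v ∉ (fun a => f₁ (x (Sum.inl a))) '' ↑D₁ ∧
        v ∉ (fun b => f₂ (w (Sum.inr b))) '' ↑D₂ ∧
        v ∉ (fun t => f₁ (x (Sum.inr t))) '' ↑T}).ncard =
      ∑ S ∈ (Finset.univ \ T).powerset,
        (pmOn G₁ {v |
            v ∉ (fun a => x (Sum.inl a)) '' ↑D₁ ∧
            v ∉ (fun t => x (Sum.inr t)) '' ↑(T ∪ S)}).ncard *
        (pmOn G₂ {v |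
            v ∉ (fun b => w (Sum.inr b)) '' ↑D₂ ∧
            v ∉ (fun t => w (Sum.inl t)) '' ↑(T ∪ ((Finset.univ \ T) \ S))}).ncard := by
  classical
  have hWfin : Finite W := Finite.of_surjective (Sum.elim f₁ f₂) (fun u => by
    rcases hcover u with ⟨v, hv⟩ | ⟨v, hv⟩
    exacts [⟨Sum.inl v, hv⟩, ⟨Sum.inr v, hv⟩])
  haveI : Fintype W := Fintype.ofFinite W
  have hglue₁ : ∀ t : Fin j, f₁ (x (Sum.inr t)) = f₂ (w (Sum.inl t)) :=
    fun t => (hglue _ _).2 ⟨t, rfl, rfl⟩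
  set A : Set W := {v |
        v ∉ (fun a => f₁ (x (Sum.inl a))) '' ↑D₁ ∧
        v ∉ (fun b => f₂ (w (Sum.inr b))) '' ↑D₂ ∧
        v ∉ (fun t => f₁ (x (Sum.inr t))) '' ↑T} with hA
  have hedge₁ : ∀ ⦃e⦄, e ∈ G₁.edgeSet → Sym2.map f₁ e ∈ G.edgeSet := by
    intro e he
    induction e using Sym2.ind with
    | _ u v =>
      rw [Sym2.map_pair_eq, SimpleGraph.mem_edgeSet, hadj]
      exact Or.inl ⟨u, v, he, rfl, rfl⟩
  have hedge₂ : ∀ ⦃e⦄, e ∈ G₂.edgeSet → Sym2.map f₂ e ∈ G.edgeSet := by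
    intro e he
    induction e using Sym2.ind with
    | _ u v =>
      rw [Sym2.map_pair_eq, SimpleGraph.mem_edgeSet, hadj]
      exact Or.inr ⟨u, v, he, rfl, rfl⟩
  have hdisj : ∀ ⦃e₁⦄, e₁ ∈ G₁.edgeSet → ∀ ⦃e₂⦄, e₂ ∈ G₂.edgeSet →
      Sym2.map f₁ e₁ ≠ Sym2.map f₂ e₂ := by
    intro e₁ he₁ e₂ he₂ heq
    induction e₁ using Sym2.ind with
    | _ u v =>
    induction e₂ using Sym2.ind with
    | _ u' v' =>
      have ha₁ : G₁.Adj u v := he₁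
      have ha₂ : G₂.Adj u' v' := he₂
      rw [Sym2.map_pair_eq, Sym2.map_pair_eq, Sym2.eq_iff] at heq
      apply hnodouble
      rcases heq with ⟨h1, h2⟩ | ⟨h1, h2⟩
      · obtain ⟨t, rfl, rfl⟩ := (hglue _ _).1 h1
        obtain ⟨t', rfl, rfl⟩ := (hglue _ _).1 h2
        exact ⟨t, t', fun h => ha₁.ne (congrArg (fun s => x (Sum.inr s)) h), ha₁, ha₂⟩
      · obtain ⟨t, rfl, rfl⟩ := (hglue _ _).1 h1
        obtain ⟨t', rfl, rfl⟩ := (hglue _ _).1 h2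
        exact ⟨t, t', fun h => ha₁.ne (congrArg (fun s => x (Sum.inr s)) h), ha₁, ha₂.symm⟩
  have hsplitE : ∀ ⦃e⦄, e ∈ G.edgeSet →
      (∃ e₁ ∈ G₁.edgeSet, Sym2.map f₁ e₁ = e) ∨ (∃ e₂ ∈ G₂.edgeSet, Sym2.map f₂ e₂ = e) := by
    intro e he
    induction e using Sym2.ind with
    | _ a b =>
      have h : G.Adj a b := he
      rw [hadj] at h
      rcases h with ⟨u, v, huv, hu, hv⟩ | ⟨u, v, huv, hu, hv⟩
      · exact Or.inl ⟨s(u, v), huv, by rw [Sym2.map_pair_eq, hu, hv]⟩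
      · exact Or.inr ⟨s(u, v), huv, by rw [Sym2.map_pair_eq, hu, hv]⟩
  have hmemA₁ : ∀ v : V₁, f₁ v ∈ A ↔
      (v ∉ (fun a => x (Sum.inl a)) '' ↑D₁ ∧ v ∉ (fun t => x (Sum.inr t)) '' ↑T) := by
    intro v
    rw [hA]
    constructor
    · rintro ⟨h1, -, h3⟩
      refine ⟨?_, ?_⟩
      · rintro ⟨a, ha, rfl⟩
        exact h1 ⟨a, ha, rfl⟩
      · rintro ⟨t, ht, rfl⟩
        exact h3 ⟨t, ht, rfl⟩
    · rintro ⟨h1, h2⟩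
      refine ⟨?_, ?_, ?_⟩
      · rintro ⟨a, ha, hav⟩
        exact h1 ⟨a, ha, hf₁ hav⟩
      · rintro ⟨b, hb, hbv⟩
        obtain ⟨t, -, hww⟩ := (hglue v (w (Sum.inr b))).1 hbv.symm
        exact Sum.inr_ne_inl (hw hww)
      · rintro ⟨t, ht, htv⟩
        exact h2 ⟨t, ht, hf₁ htv⟩
  have hmemA₂ : ∀ v : V₂, f₂ v ∈ A ↔
      (v ∉ (fun b => w (Sum.inr b)) '' ↑D₂ ∧ v ∉ (fun t => w (Sum.inl t)) '' ↑T) := by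
    intro v
    rw [hA]
    constructor
    · rintro ⟨-, h2, h3⟩
      refine ⟨?_, ?_⟩
      · rintro ⟨b, hb, rfl⟩
        exact h2 ⟨b, hb, rfl⟩
      · rintro ⟨t, ht, rfl⟩
        exact h3 ⟨t, ht, hglue₁ t⟩
    · rintro ⟨h1, h2⟩
      refine ⟨?_, ?_, ?_⟩
      · rintro ⟨a, ha, hav⟩
        obtain ⟨t, hxx, -⟩ := (hglue (x (Sum.inl a)) v).1 hav
        exact Sum.inl_ne_inr (hx hxx)
      · rintro ⟨b, hb, hbv⟩
        exact h1 ⟨b, hb, hf₂ hbv⟩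
      · rintro ⟨t, ht, htv⟩
        obtain ⟨t', hxt, hwt⟩ := (hglue _ _).1 htv
        cases Sum.inr.inj (hx hxt)
        exact h2 ⟨t, ht, hwt.symm⟩
  have hb1 : ∀ F ∈ pmOn G A, spl G₁ f₁ F ∈ pmOn G₁
      {v | v ∉ (fun a => x (Sum.inl a)) '' ↑D₁ ∧
           v ∉ (fun t => x (Sum.inr t)) '' ↑(T ∪ sigIdx G₂ w f₂ T F)} := by
    rintro F ⟨hFsub, hFsupp, hFcov⟩
    refine ⟨fun e he => he.1, ?_, ?_⟩
    · rintro e ⟨heG, heF⟩ v hv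
      have hfvA : f₁ v ∈ A := hFsupp _ heF _ (Sym2.mem_map.2 ⟨v, hv, rfl⟩)
      obtain ⟨h1, h2⟩ := (hmemA₁ v).1 hfvA
      refine ⟨h1, ?_⟩
      rintro ⟨t, ht, rfl⟩
      rw [Finset.mem_coe, Finset.mem_union] at ht
      rcases ht with ht | ht
      · exact h2 ⟨t, ht, rfl⟩
      · obtain ⟨-, e₂, ⟨he₂G, he₂F⟩, hte₂⟩ := (mem_sigIdx G₂ w f₂ T F t).1 ht
        obtain ⟨e₀, -, huniq⟩ := hFcov _ hfvA
        have h₁ := huniq _ ⟨heF, Sym2.mem_map.2 ⟨x (Sum.inr t), hv, rfl⟩⟩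
        have h₂ := huniq _ ⟨he₂F, Sym2.mem_map.2 ⟨w (Sum.inl t), hte₂, (hglue₁ t).symm⟩⟩
        exact hdisj heG he₂G (h₁.trans h₂.symm)
    · rintro v ⟨h1, h2⟩
      have hvT : v ∉ (fun t => x (Sum.inr t)) '' ↑T := by
        rintro ⟨t, ht, rfl⟩
        exact h2 ⟨t, by simp [ht], rfl⟩
      have hfvA : f₁ v ∈ A := (hmemA₁ v).2 ⟨h1, hvT⟩
      obtain ⟨e, ⟨heF, hve⟩, huniq⟩ := hFcov _ hfvA
      rcases hsplitE (hFsub heF) with ⟨e₁, he₁, rfl⟩ | ⟨e₂, he₂, rfl⟩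
      · obtain ⟨u, hu, huv⟩ := Sym2.mem_map.1 hve
        obtain rfl := hf₁ huv
        refine ⟨e₁, ⟨⟨he₁, heF⟩, hu⟩, ?_⟩
        rintro e' ⟨⟨he'G, he'F⟩, hve'⟩
        exact Sym2.map.injective hf₁ (huniq _ ⟨he'F, Sym2.mem_map.2 ⟨_, hve', rfl⟩⟩)
      · exfalso
        obtain ⟨u, hu, huv⟩ := Sym2.mem_map.1 hve
        obtain ⟨t, rfl, rfl⟩ := (hglue v u).1 huv.symm
        refine h2 ⟨t, ?_, rfl⟩
        rw [Finset.mem_coe, Finset.mem_union]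
        right
        refine (mem_sigIdx G₂ w f₂ T F t).2 ⟨?_, ⟨e₂, ⟨he₂, heF⟩, hu⟩⟩
        exact Finset.mem_sdiff.2 ⟨Finset.mem_univ t, fun htT => hvT ⟨t, htT, rfl⟩⟩
  have hb2 : ∀ F ∈ pmOn G A, spl G₂ f₂ F ∈ pmOn G₂
      {v | v ∉ (fun b => w (Sum.inr b)) '' ↑D₂ ∧
           v ∉ (fun t => w (Sum.inl t)) ''
             ↑(T ∪ ((Finset.univ \ T) \ sigIdx G₂ w f₂ T F))} := by
    rintro F ⟨hFsub, hFsupp, hFcov⟩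
    refine ⟨fun e he => he.1, ?_, ?_⟩
    · rintro e ⟨heG, heF⟩ v hv
      have hfvA : f₂ v ∈ A := hFsupp _ heF _ (Sym2.mem_map.2 ⟨v, hv, rfl⟩)
      obtain ⟨h1, h2⟩ := (hmemA₂ v).1 hfvA
      refine ⟨h1, ?_⟩
      rintro ⟨t, ht, rfl⟩
      rw [Finset.mem_coe, Finset.mem_union] at ht
      rcases ht with ht | ht
      · exact h2 ⟨t, ht, rfl⟩
      · rw [Finset.mem_sdiff] at ht
        exact ht.2 ((mem_sigIdx G₂ w f₂ T F t).2 ⟨ht.1, ⟨e, ⟨heG, heF⟩, hv⟩⟩)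
    · rintro v ⟨h1, h2⟩
      have hvT : v ∉ (fun t => w (Sum.inl t)) '' ↑T := by
        rintro ⟨t, ht, rfl⟩
        exact h2 ⟨t, by simp [ht], rfl⟩
      have hfvA : f₂ v ∈ A := (hmemA₂ v).2 ⟨h1, hvT⟩
      obtain ⟨e, ⟨heF, hve⟩, huniq⟩ := hFcov _ hfvA
      rcases hsplitE (hFsub heF) with ⟨e₁, he₁, rfl⟩ | ⟨e₂, he₂, rfl⟩
      · exfalso
        obtain ⟨u, hu, huv⟩ := Sym2.mem_map.1 hve
        obtain ⟨t, rfl, rfl⟩ := (hglue u v).1 huv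
        have htT : t ∉ T := fun htT => hvT ⟨t, htT, rfl⟩
        have htσ : t ∈ sigIdx G₂ w f₂ T F := by
          by_contra hns
          refine h2 ⟨t, ?_, rfl⟩
          rw [Finset.mem_coe, Finset.mem_union]
          exact Or.inr (Finset.mem_sdiff.2
            ⟨Finset.mem_sdiff.2 ⟨Finset.mem_univ t, htT⟩, hns⟩)
        obtain ⟨-, e₂, ⟨he₂G, he₂F⟩, hte₂⟩ := (mem_sigIdx G₂ w f₂ T F t).1 htσ
        have hA₁ := huniq _ ⟨heF, hve⟩
        have hA₂ := huniq _ ⟨he₂F, Sym2.mem_map.2 ⟨w (Sum.inl t), hte₂, rfl⟩⟩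
        exact hdisj he₁ he₂G (hA₁.trans hA₂.symm)
      · obtain ⟨u, hu, huv⟩ := Sym2.mem_map.1 hve
        obtain rfl := hf₂ huv
        refine ⟨e₂, ⟨⟨he₂, heF⟩, hu⟩, ?_⟩
        rintro e' ⟨⟨he'G, he'F⟩, hve'⟩
        exact Sym2.map.injective hf₂ (huniq _ ⟨he'F, Sym2.mem_map.2 ⟨_, hve', rfl⟩⟩)
  have hc : ∀ F ∈ pmOn G A, comb f₁ f₂ (spl G₁ f₁ F) (spl G₂ f₂ F) = F := by
    rintro F ⟨hFsub, -, -⟩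
    apply Set.Subset.antisymm
    · rintro e (⟨e₁, he₁, rfl⟩ | ⟨e₂, he₂, rfl⟩)
      exacts [he₁.2, he₂.2]
    · intro e he
      rcases hsplitE (hFsub he) with ⟨e₁, he₁, rfl⟩ | ⟨e₂, he₂, rfl⟩
      · exact Or.inl ⟨e₁, ⟨he₁, he⟩, rfl⟩
      · exact Or.inr ⟨e₂, ⟨he₂, he⟩, rfl⟩
  have hd : ∀ S : Finset (Fin j), S ⊆ Finset.univ \ T →
      ∀ E₁ ∈ pmOn G₁ {v | v ∉ (fun a => x (Sum.inl a)) '' ↑D₁ ∧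
          v ∉ (fun t => x (Sum.inr t)) '' ↑(T ∪ S)},
      ∀ E₂ ∈ pmOn G₂ {v | v ∉ (fun b => w (Sum.inr b)) '' ↑D₂ ∧
          v ∉ (fun t => w (Sum.inl t)) '' ↑(T ∪ ((Finset.univ \ T) \ S))},
      comb f₁ f₂ E₁ E₂ ∈ pmOn G A := by
    rintro S hS E₁ ⟨h1sub, h1supp, h1cov⟩ E₂ ⟨h2sub, h2supp, h2cov⟩
    have cov₁ : ∀ v : V₁, (v ∉ (fun a => x (Sum.inl a)) '' ↑D₁ ∧
        v ∉ (fun t => x (Sum.inr t)) '' ↑(T ∪ S)) →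
        ∃! e, e ∈ comb f₁ f₂ E₁ E₂ ∧ f₁ v ∈ e := by
      rintro v hv
      obtain ⟨e₁, ⟨he₁E, hve₁⟩, huniq₁⟩ := h1cov v hv
      refine ⟨Sym2.map f₁ e₁, ⟨Or.inl ⟨e₁, he₁E, rfl⟩, Sym2.mem_map.2 ⟨v, hve₁, rfl⟩⟩, ?_⟩
      rintro e' ⟨(⟨e₁', he₁', rfl⟩ | ⟨e₂', he₂', rfl⟩), hve'⟩
      · obtain ⟨u, hu, huv⟩ := Sym2.mem_map.1 hve'
        obtain rfl := hf₁ huv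
        rw [huniq₁ _ ⟨he₁', hu⟩]
      · exfalso
        obtain ⟨u, hu, huv⟩ := Sym2.mem_map.1 hve'
        obtain ⟨t, htv, htu⟩ := (hglue v u).1 huv.symm
        subst htv
        subst htu
        obtain ⟨-, g2⟩ := h2supp _ he₂' _ hu
        have htT : t ∉ T := fun h => hv.2 ⟨t, by simp [h], rfl⟩
        have htS : t ∉ S := fun h => hv.2 ⟨t, by simp [h], rfl⟩
        exact g2 ⟨t, by simp [Finset.mem_sdiff, htT, htS], rfl⟩
    have cov₂ : ∀ v : V₂, (v ∉ (fun b => w (Sum.inr b)) '' ↑D₂ ∧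
        v ∉ (fun t => w (Sum.inl t)) '' ↑(T ∪ ((Finset.univ \ T) \ S))) →
        ∃! e, e ∈ comb f₁ f₂ E₁ E₂ ∧ f₂ v ∈ e := by
      rintro v hv
      obtain ⟨e₂, ⟨he₂E, hve₂⟩, huniq₂⟩ := h2cov v hv
      refine ⟨Sym2.map f₂ e₂, ⟨Or.inr ⟨e₂, he₂E, rfl⟩, Sym2.mem_map.2 ⟨v, hve₂, rfl⟩⟩, ?_⟩
      rintro e' ⟨(⟨e₁', he₁', rfl⟩ | ⟨e₂', he₂', rfl⟩), hve'⟩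
      · exfalso
        obtain ⟨u, hu, huv⟩ := Sym2.mem_map.1 hve'
        obtain ⟨t, htu, htv⟩ := (hglue u v).1 huv
        subst htu
        subst htv
        obtain ⟨-, g2⟩ := h1supp _ he₁' _ hu
        have htT : t ∉ T := fun h => hv.2 ⟨t, by simp [h], rfl⟩
        have htS : t ∈ S := by
          by_contra h
          exact hv.2 ⟨t, by simp [Finset.mem_sdiff, htT, h], rfl⟩
        exact g2 ⟨t, by simp [htS], rfl⟩
      · obtain ⟨u, hu, huv⟩ := Sym2.mem_map.1 hve'
        obtain rfl := hf₂ huv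
        rw [huniq₂ _ ⟨he₂', hu⟩]
    refine ⟨?_, ?_, ?_⟩
    · rintro e (⟨e₁, he₁, rfl⟩ | ⟨e₂, he₂, rfl⟩)
      exacts [hedge₁ (h1sub he₁), hedge₂ (h2sub he₂)]
    · rintro e (⟨e₁, he₁, rfl⟩ | ⟨e₂, he₂, rfl⟩) a ha
      · obtain ⟨u, hu, rfl⟩ := Sym2.mem_map.1 ha
        obtain ⟨g1, g2⟩ := h1supp _ he₁ _ hu
        refine (hmemA₁ u).2 ⟨g1, ?_⟩
        rintro ⟨t, ht, rfl⟩
        exact g2 ⟨t, by simp [ht], rfl⟩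
      · obtain ⟨u, hu, rfl⟩ := Sym2.mem_map.1 ha
        obtain ⟨g1, g2⟩ := h2supp _ he₂ _ hu
        refine (hmemA₂ u).2 ⟨g1, ?_⟩
        rintro ⟨t, ht, rfl⟩
        exact g2 ⟨t, by simp [ht], rfl⟩
    · intro a haA
      rcases hcover a with ⟨v, rfl⟩ | ⟨v, rfl⟩
      · obtain ⟨q1, q2⟩ := (hmemA₁ v).1 haA
        by_cases hg : ∃ t : Fin j, v = x (Sum.inr t)
        · obtain ⟨t, rfl⟩ := hg
          have htT : t ∉ T := fun h => q2 ⟨t, h, rfl⟩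
          by_cases htS : t ∈ S
          · rw [hglue₁ t]
            refine cov₂ (w (Sum.inl t)) ⟨?_, ?_⟩
            · exact ((hmemA₂ _).1 (by rw [← hglue₁ t]; exact haA)).1
            · rintro ⟨t', ht', hwt⟩
              cases Sum.inl.inj (hw hwt)
              rw [Finset.mem_coe, Finset.mem_union] at ht'
              rcases ht' with h | h
              · exact htT h
              · exact (Finset.mem_sdiff.1 h).2 htS
          · refine cov₁ (x (Sum.inr t)) ⟨q1, ?_⟩
            rintro ⟨t', ht', hxt⟩
            cases Sum.inr.inj (hx hxt)
            rw [Finset.mem_coe, Finset.mem_union] at ht'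
            rcases ht' with h | h
            · exact htT h
            · exact htS h
        · refine cov₁ v ⟨q1, ?_⟩
          rintro ⟨t, -, rfl⟩
          exact hg ⟨t, rfl⟩
      · obtain ⟨q1, q2⟩ := (hmemA₂ v).1 haA
        by_cases hg : ∃ t : Fin j, v = w (Sum.inl t)
        · obtain ⟨t, rfl⟩ := hg
          have htT : t ∉ T := fun h => q2 ⟨t, h, rfl⟩
          by_cases htS : t ∈ S
          · refine cov₂ (w (Sum.inl t)) ⟨q1, ?_⟩
            rintro ⟨t', ht', hwt⟩
            cases Sum.inl.inj (hw hwt)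
            rw [Finset.mem_coe, Finset.mem_union] at ht'
            rcases ht' with h | h
            · exact htT h
            · exact (Finset.mem_sdiff.1 h).2 htS
          · rw [← hglue₁ t]
            refine cov₁ (x (Sum.inr t)) ⟨?_, ?_⟩
            · exact ((hmemA₁ _).1 (by rw [hglue₁ t]; exact haA)).1
            · rintro ⟨t', ht', hxt⟩
              cases Sum.inr.inj (hx hxt)
              rw [Finset.mem_coe, Finset.mem_union] at ht'
              rcases ht' with h | h
              · exact htT h
              · exact htS h
        · refine cov₂ v ⟨q1, ?_⟩
          rintro ⟨t, -, rfl⟩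
          exact hg ⟨t, rfl⟩
  have hsig : ∀ S : Finset (Fin j), S ⊆ Finset.univ \ T →
      ∀ E₁ ∈ pmOn G₁ {v | v ∉ (fun a => x (Sum.inl a)) '' ↑D₁ ∧
          v ∉ (fun t => x (Sum.inr t)) '' ↑(T ∪ S)},
      ∀ E₂ ∈ pmOn G₂ {v | v ∉ (fun b => w (Sum.inr b)) '' ↑D₂ ∧
          v ∉ (fun t => w (Sum.inl t)) '' ↑(T ∪ ((Finset.univ \ T) \ S))},
      sigIdx G₂ w f₂ T (comb f₁ f₂ E₁ E₂) = S := by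
    rintro S hS E₁ ⟨h1sub, h1supp, h1cov⟩ E₂ ⟨h2sub, h2supp, h2cov⟩
    ext t
    rw [mem_sigIdx]
    constructor
    · rintro ⟨htT, e, ⟨heG, heC⟩, hte⟩
      rcases heC with ⟨e₁, he₁, heq⟩ | ⟨e₂, he₂, heq⟩
      · exact absurd heq (hdisj (h1sub he₁) heG)
      · obtain rfl := Sym2.map.injective hf₂ heq
        obtain ⟨-, g2⟩ := h2supp _ he₂ _ hte
        by_contra htS
        exact g2 ⟨t, by
          simp only [Finset.mem_coe, Finset.mem_union, Finset.mem_sdiff]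
          exact Or.inr ⟨⟨Finset.mem_univ t, (Finset.mem_sdiff.1 htT).2⟩, htS⟩, rfl⟩
    · intro htS
      have htT := hS htS
      refine ⟨htT, ?_⟩
      have hwP : w (Sum.inl t) ∈ {v | v ∉ (fun b => w (Sum.inr b)) '' ↑D₂ ∧
          v ∉ (fun t => w (Sum.inl t)) '' ↑(T ∪ ((Finset.univ \ T) \ S))} := by
        refine ⟨?_, ?_⟩
        · rintro ⟨b, -, hbw⟩
          exact Sum.inr_ne_inl (hw hbw)
        · rintro ⟨t', ht', hwt⟩
          cases Sum.inl.inj (hw hwt)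
          rw [Finset.mem_coe, Finset.mem_union] at ht'
          rcases ht' with h | h
          · exact (Finset.mem_sdiff.1 htT).2 h
          · exact (Finset.mem_sdiff.1 h).2 htS
      obtain ⟨e₂, ⟨he₂E, hte₂⟩, -⟩ := h2cov _ hwP
      exact ⟨e₂, ⟨h2sub he₂E, Or.inr ⟨e₂, he₂E, rfl⟩⟩, hte₂⟩
  have hff : ∀ E₁ : Set (Sym2 V₁), E₁ ⊆ G₁.edgeSet → ∀ E₂ : Set (Sym2 V₂), E₂ ⊆ G₂.edgeSet →
      spl G₁ f₁ (comb f₁ f₂ E₁ E₂) = E₁ ∧ spl G₂ f₂ (comb f₁ f₂ E₁ E₂) = E₂ := by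
    intro E₁ h1 E₂ h2
    constructor
    · apply Set.Subset.antisymm
      · rintro e ⟨heG, (⟨e₁, he₁, heq⟩ | ⟨e₂, he₂, heq⟩)⟩
        · obtain rfl := Sym2.map.injective hf₁ heq
          exact he₁
        · exact absurd heq.symm (hdisj heG (h2 he₂))
      · intro e he
        exact ⟨h1 he, Or.inl ⟨e, he, rfl⟩⟩
    · apply Set.Subset.antisymm
      · rintro e ⟨heG, (⟨e₁, he₁, heq⟩ | ⟨e₂, he₂, heq⟩)⟩
        · exact absurd heq (hdisj (h1 he₁) heG)
        · obtain rfl := Sym2.map.injective hf₂ heq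
          exact he₂
      · intro e he
        exact ⟨h2 he, Or.inr ⟨e, he, rfl⟩⟩
  rw [Set.ncard_eq_toFinset_card' (pmOn G A)]
  rw [Finset.card_eq_sum_card_fiberwise (f := fun F => sigIdx G₂ w f₂ T F)
    (t := (Finset.univ \ T).powerset)
    (fun F _ => Finset.mem_powerset.2 (sigIdx_subset G₂ w f₂ T F))]
  refine Finset.sum_congr rfl (fun S hS => ?_)
  have hSsub : S ⊆ Finset.univ \ T := Finset.mem_powerset.1 hS
  rw [Set.ncard_eq_toFinset_card', Set.ncard_eq_toFinset_card', ← Finset.card_product]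
  refine Finset.card_bij' (fun F _ => (spl G₁ f₁ F, spl G₂ f₂ F))
    (fun E _ => comb f₁ f₂ E.1 E.2) ?_ ?_ ?_ ?_
  · intro F hF
    rw [Finset.mem_filter, Set.mem_toFinset] at hF
    rw [Finset.mem_product, Set.mem_toFinset, Set.mem_toFinset]
    obtain ⟨hF1, hF2⟩ := hF
    constructor
    · have h := hb1 F hF1
      rw [hF2] at h
      exact h
    · have h := hb2 F hF1
      rw [hF2] at h
      exact h
  · intro E hE
    rw [Finset.mem_product, Set.mem_toFinset, Set.mem_toFinset] at hE
    rw [Finset.mem_filter, Set.mem_toFinset]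
    exact ⟨hd S hSsub E.1 hE.1 E.2 hE.2, hsig S hSsub E.1 hE.1 E.2 hE.2⟩
  · intro F hF
    rw [Finset.mem_filter, Set.mem_toFinset] at hF
    exact hc F hF.1
  · intro E hE
    rw [Finset.mem_product, Set.mem_toFinset, Set.mem_toFinset] at hE
    have h := hff E.1 hE.1.1 E.2 hE.2.1
    exact Prod.ext h.1 h.2

/-- **The Patching Lemma (combinatorial form).**
`G₁` has `i + j` distinguished distinct vertices `x (inl a)` (for `a : Fin i`) and
`x (inr t)` (for `t : Fin j`); `G₂` has `j + k` distinguished distinct vertices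
`w (inl t)` (for `t : Fin j`) and `w (inr b)` (for `b : Fin k`).  The glued graph `G`
(on `W`) is obtained from the disjoint union by identifying `x (inr t)` with `w (inl t)`
for each `t : Fin j` (edges: union of the two edge sets); no pair of identified vertices
is joined by an edge in both `G₁` and `G₂`.  `J` is the set of glued vertices of `G`.
Then for all `D₁ ⊆ Fin i`, `D₂ ⊆ Fin k`, `T ⊆ Fin j` (indexing subsets of the
corresponding distinguished vertices):
`M(G − (D₁ ∪ D₂ ∪ T)) = Σ_{S ⊆ J∖T} M(G₁ − (D₁ ∪ T₁ ∪ S₁)) · M(G₂ − (D₂ ∪ T₂ ∪ ((J∖T)∖S)₂))`. -/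
theorem patching_lemma
    {V₁ V₂ W : Type*} [Fintype V₁] [Fintype V₂]
    {i j k : ℕ} (G₁ : SimpleGraph V₁) (G₂ : SimpleGraph V₂)
    (x : Fin i ⊕ Fin j → V₁) (w : Fin j ⊕ Fin k → V₂)
    (hx : Function.Injective x) (hw : Function.Injective w)
    (hnodouble : ¬ ∃ t t' : Fin j, t ≠ t' ∧
      G₁.Adj (x (Sum.inr t)) (x (Sum.inr t')) ∧ G₂.Adj (w (Sum.inl t)) (w (Sum.inl t')))
    (f₁ : V₁ → W) (f₂ : V₂ → W)
    (hf₁ : Function.Injective f₁) (hf₂ : Function.Injective f₂)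
    (hcover : ∀ u : W, (∃ v, f₁ v = u) ∨ (∃ v, f₂ v = u))
    (hglue : ∀ v₁ v₂, f₁ v₁ = f₂ v₂ ↔ ∃ t : Fin j, v₁ = x (Sum.inr t) ∧ v₂ = w (Sum.inl t))
    (G : SimpleGraph W)
    (hadj : ∀ a b, G.Adj a b ↔
      (∃ u v, G₁.Adj u v ∧ f₁ u = a ∧ f₁ v = b) ∨
      (∃ u v, G₂.Adj u v ∧ f₂ u = a ∧ f₂ v = b))
    (D₁ : Finset (Fin i)) (D₂ : Finset (Fin k)) (T : Finset (Fin j)) :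
    numPM (G.induce {v |
        v ∉ (fun a => f₁ (x (Sum.inl a))) '' ↑D₁ ∧
        v ∉ (fun b => f₂ (w (Sum.inr b))) '' ↑D₂ ∧
        v ∉ (fun t => f₁ (x (Sum.inr t))) '' ↑T}) =
      ∑ S ∈ (Finset.univ \ T).powerset,
        numPM (G₁.induce {v |
            v ∉ (fun a => x (Sum.inl a)) '' ↑D₁ ∧
            v ∉ (fun t => x (Sum.inr t)) '' ↑(T ∪ S)}) *
        numPM (G₂.induce {v |
            v ∉ (fun b => w (Sum.inr b)) '' ↑D₂ ∧
            v ∉ (fun t => w (Sum.inl t)) '' ↑(T ∪ ((Finset.univ \ T) \ S))}) := by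
  simp only [numPM_induce]
  exact key G₁ G₂ x w hx hw hnodouble f₁ f₂ hf₁ hf₂ hcover hglue G hadj D₁ D₂ T
end

section
/- For every integer n ≥ 1, Σ_{A ∈ 𝒜_n} 2^{N₊(A)} = Σ_{A ∈ 𝒜_{n+1}} 2^{N₋(A)}. -/
/-- An alternating sign matrix of order `n`: entries in `{-1, 0, 1}`, every partial row
sum and partial column sum equals `0` or `1`, and every full row and column sums to `1`. -/
def IsASM {n : ℕ} (A : Matrix (Fin n) (Fin n) ℤ) : Prop :=
  (∀ i j, A i j = -1 ∨ A i j = 0 ∨ A i j = 1) ∧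
  (∀ i m, (∑ x ∈ Finset.Iic m, A i x) = 0 ∨ (∑ x ∈ Finset.Iic m, A i x) = 1) ∧
  (∀ j m, (∑ x ∈ Finset.Iic m, A x j) = 0 ∨ (∑ x ∈ Finset.Iic m, A x j) = 1) ∧
  (∀ i, (∑ x, A i x) = 1) ∧
  (∀ j, (∑ x, A x j) = 1)

/-- The number of entries of `A` equal to `+1`. -/
def Nplus {n : ℕ} (A : Matrix (Fin n) (Fin n) ℤ) : ℕ :=
  (Finset.univ.filter fun p : Fin n × Fin n => A p.1 p.2 = 1).card

/-- The number of entries of `A` equal to `−1`. -/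
def Nminus {n : ℕ} (A : Matrix (Fin n) (Fin n) ℤ) : ℕ :=
  (Finset.univ.filter fun p : Fin n × Fin n => A p.1 p.2 = -1).card

open Finset

attribute [local instance] Classical.propDecidable

namespace ASMaux

/-- matrix entry from corner sums -/
def E (c : ℕ → ℕ → ℤ) (i j : ℕ) : ℤ := c (i+1) (j+1) + c i j - c i (j+1) - c (i+1) j

/-- corner-sum matrices of order n, extended to all of ℕ² -/
def C (n : ℕ) (c : ℕ → ℕ → ℤ) : Prop :=
  (∀ j, c 0 j = 0) ∧ (∀ i, c i 0 = 0) ∧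
  (∀ i j, n ≤ i → c i j = (min j n : ℕ)) ∧
  (∀ i j, n ≤ j → c i j = (min i n : ℕ)) ∧
  (∀ i j, c (i+1) j = c i j ∨ c (i+1) j = c i j + 1) ∧
  (∀ i j, c i (j+1) = c i j ∨ c i (j+1) = c i j + 1)

def Compat (n : ℕ) (c d : ℕ → ℕ → ℤ) : Prop :=
  ∀ i j, i ≤ n → j ≤ n →
    (c i j - 1 ≤ d i j ∧ d i j ≤ c i j) ∧
    (c i j ≤ d (i+1) j ∧ d (i+1) j ≤ c i j + 1) ∧
    (c i j ≤ d i (j+1) ∧ d i (j+1) ≤ c i j + 1) ∧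
    (c i j ≤ d (i+1) (j+1) ∧ d (i+1) (j+1) ≤ c i j + 1)

def plusF (n : ℕ) (c : ℕ → ℕ → ℤ) : Finset (ℕ × ℕ) :=
  (range n ×ˢ range n).filter fun p => E c p.1 p.2 = 1

def minusF (n : ℕ) (c : ℕ → ℕ → ℤ) : Finset (ℕ × ℕ) :=
  (range n ×ˢ range n).filter fun p => E c p.1 p.2 = -1

def ext {n : ℕ} (A : Matrix (Fin n) (Fin n) ℤ) : ℕ → ℕ → ℤ := fun i j =>
  if h : i < n ∧ j < n then A ⟨i, h.1⟩ ⟨j, h.2⟩ else 0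

def corner {n : ℕ} (A : Matrix (Fin n) (Fin n) ℤ) : ℕ → ℕ → ℤ := fun i j =>
  ∑ p ∈ Finset.range i, ∑ q ∈ Finset.range j, ext A p q

def asmOf (n : ℕ) (c : ℕ → ℕ → ℤ) : Matrix (Fin n) (Fin n) ℤ := fun i j => E c i.val j.val

lemma E_corner {n : ℕ} (A : Matrix (Fin n) (Fin n) ℤ) (i j : ℕ) :
    E (corner A) i j = ext A i j := by
  simp only [E, corner, Finset.sum_range_succ]
  ring

lemma tele_h (c : ℕ → ℕ → ℤ) (i j : ℕ) :
    ∑ q ∈ Finset.range j, E c i q = c (i+1) j - c i j - c (i+1) 0 + c i 0 := by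
  induction j with
  | zero => simp
  | succ j ih => rw [Finset.sum_range_succ, ih]; simp [E]; ring

lemma tele_v (c : ℕ → ℕ → ℤ) (i j : ℕ) :
    ∑ p ∈ Finset.range i, E c p j = c i (j+1) - c i j - c 0 (j+1) + c 0 j := by
  induction i with
  | zero => simp
  | succ i ih => rw [Finset.sum_range_succ, ih]; simp [E]; ring

/-- translation between Fin-indexed Iic sums and range sums -/
lemma sum_Iic_fin {n : ℕ} (m : Fin n) (g : ℕ → ℤ) :
    ∑ x ∈ Finset.Iic m, g x.val = ∑ q ∈ Finset.range (m.val+1), g q := by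
  apply Finset.sum_nbij' (i := fun (x : Fin n) => x.val)
    (j := fun q => if h : q < n then (⟨q, h⟩ : Fin n) else m)
  · intro a ha
    simp only [Finset.mem_Iic] at ha
    simp only [Finset.mem_range]
    omega
  · intro a ha
    simp only [Finset.mem_range] at ha
    have hq : a < n := lt_of_le_of_lt (by omega) m.isLt
    simp only [dif_pos hq, Finset.mem_Iic]
    exact Fin.mk_le_of_le_val (by omega)
  · intro a ha
    simp only [Finset.mem_Iic] at ha
    simp [a.isLt]
  · intro a ha
    simp only [Finset.mem_range] at ha
    have hq : a < n := lt_of_le_of_lt (by omega) m.isLt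
    simp [hq]
  · intro a ha; rfl

lemma ext_eq {n : ℕ} (A : Matrix (Fin n) (Fin n) ℤ) (x y : Fin n) :
    ext A x.val y.val = A x y := by
  simp [ext, x.isLt, y.isLt]

end ASMaux

namespace ASMaux

variable {n : ℕ}

lemma corner_vstep (A : Matrix (Fin n) (Fin n) ℤ) (i j : ℕ) :
    corner A (i+1) j - corner A i j = ∑ q ∈ Finset.range j, ext A i q := by
  simp [corner, Finset.sum_range_succ]

lemma corner_hstep (A : Matrix (Fin n) (Fin n) ℤ) (i j : ℕ) :
    corner A i (j+1) - corner A i j = ∑ p ∈ Finset.range i, ext A p j := by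
  simp [corner, Finset.sum_range_succ, Finset.sum_add_distrib]

lemma ext_zero_left {A : Matrix (Fin n) (Fin n) ℤ} {i j : ℕ} (h : n ≤ i) : ext A i j = 0 := by
  simp only [ext]; rw [dif_neg]; omega

lemma ext_zero_right {A : Matrix (Fin n) (Fin n) ℤ} {i j : ℕ} (h : n ≤ j) : ext A i j = 0 := by
  simp only [ext]; rw [dif_neg]; omega

lemma row_full {A : Matrix (Fin n) (Fin n) ℤ} (i : Fin n) :
    ∑ q ∈ Finset.range n, ext A i.val q = ∑ x, A i x := by
  rw [← Fin.sum_univ_eq_sum_range (fun q => ext A i.val q) n]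
  exact Finset.sum_congr rfl fun x _ => ext_eq A i x

lemma col_full {A : Matrix (Fin n) (Fin n) ℤ} (j : Fin n) :
    ∑ p ∈ Finset.range n, ext A p j.val = ∑ x, A x j := by
  rw [← Fin.sum_univ_eq_sum_range (fun p => ext A p j.val) n]
  exact Finset.sum_congr rfl fun x _ => ext_eq A x j

lemma row_range {A : Matrix (Fin n) (Fin n) ℤ} (i : Fin n) {j : ℕ} (h0 : 0 < j) (hn : j ≤ n) :
    ∑ q ∈ Finset.range j, ext A i.val q = ∑ x ∈ Finset.Iic (⟨j-1, by omega⟩ : Fin n), A i x := by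
  have h1 := sum_Iic_fin (n := n) ⟨j-1, by omega⟩ (fun q => ext A i.val q)
  have h2 : j - 1 + 1 = j := by omega
  rw [h2] at h1
  rw [← h1]
  exact Finset.sum_congr rfl fun x _ => ext_eq A i x

lemma col_range {A : Matrix (Fin n) (Fin n) ℤ} (j : Fin n) {i : ℕ} (h0 : 0 < i) (hn : i ≤ n) :
    ∑ p ∈ Finset.range i, ext A p j.val = ∑ x ∈ Finset.Iic (⟨i-1, by omega⟩ : Fin n), A x j := by
  have h1 := sum_Iic_fin (n := n) ⟨i-1, by omega⟩ (fun p => ext A p j.val)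
  have h2 : i - 1 + 1 = i := by omega
  rw [h2] at h1
  rw [← h1]
  exact Finset.sum_congr rfl fun x _ => ext_eq A x j

lemma sum_range_clamp {A : Matrix (Fin n) (Fin n) ℤ} {j : ℕ} (h : n ≤ j) (i : ℕ) :
    ∑ q ∈ Finset.range j, ext A i q = ∑ q ∈ Finset.range n, ext A i q := by
  rw [← Finset.sum_subset (Finset.range_subset_range.mpr h)]
  intro x _ hx
  simp only [Finset.mem_range] at hx
  exact ext_zero_right (by omega)

lemma sum_range_clamp' {A : Matrix (Fin n) (Fin n) ℤ} {i : ℕ} (h : n ≤ i) (j : ℕ) :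
    ∑ p ∈ Finset.range i, ext A p j = ∑ p ∈ Finset.range n, ext A p j := by
  rw [← Finset.sum_subset (Finset.range_subset_range.mpr h)]
  intro x _ hx
  simp only [Finset.mem_range] at hx
  exact ext_zero_left (by omega)

lemma rowsum_mem {A : Matrix (Fin n) (Fin n) ℤ} (hA : IsASM A) {i : ℕ} (hi : i < n) (j : ℕ) :
    (∑ q ∈ Finset.range j, ext A i q) = 0 ∨ (∑ q ∈ Finset.range j, ext A i q) = 1 := by
  rcases Nat.eq_zero_or_pos j with hj | hj
  · subst hj; simp
  rcases le_or_gt j n with hjn | hjn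
  · have : (⟨i, hi⟩ : Fin n).val = i := rfl
    rw [show i = (⟨i, hi⟩ : Fin n).val from rfl, row_range ⟨i, hi⟩ hj hjn]
    exact hA.2.1 _ _
  · rw [sum_range_clamp (by omega), show i = (⟨i, hi⟩ : Fin n).val from rfl, row_full ⟨i, hi⟩]
    right; exact hA.2.2.2.1 _

lemma colsum_mem {A : Matrix (Fin n) (Fin n) ℤ} (hA : IsASM A) {j : ℕ} (hj : j < n) (i : ℕ) :
    (∑ p ∈ Finset.range i, ext A p j) = 0 ∨ (∑ p ∈ Finset.range i, ext A p j) = 1 := by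
  rcases Nat.eq_zero_or_pos i with hi | hi
  · subst hi; simp
  rcases le_or_gt i n with hin | hin
  · rw [show j = (⟨j, hj⟩ : Fin n).val from rfl, col_range ⟨j, hj⟩ hi hin]
    exact hA.2.2.1 _ _
  · rw [sum_range_clamp' (by omega), show j = (⟨j, hj⟩ : Fin n).val from rfl, col_full ⟨j, hj⟩]
    right; exact hA.2.2.2.2 _

lemma ite_sum_min (j : ℕ) :
    (∑ q ∈ Finset.range j, if q < n then (1:ℤ) else 0) = (min j n : ℕ) := by
  induction j with
  | zero => simp
  | succ j ih =>
    rw [Finset.sum_range_succ, ih]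
    by_cases h : j < n
    · rw [if_pos h]; push_cast; omega
    · rw [if_neg h]; push_cast; omega

lemma isASM_corner {A : Matrix (Fin n) (Fin n) ℤ} (hA : IsASM A) : C n (corner A) := by
  refine ⟨fun j => by simp [corner], fun i => by simp [corner], ?_, ?_, ?_, ?_⟩
  · intro i j hn
    have h1 : corner A i j = ∑ p ∈ Finset.range n, ∑ q ∈ Finset.range j, ext A p q := by
      unfold corner
      rw [← Finset.sum_subset (Finset.range_subset_range.mpr hn)]
      intro x _ hx
      simp only [Finset.mem_range] at hx
      exact Finset.sum_eq_zero fun q _ => ext_zero_left (by omega)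
    rw [h1, Finset.sum_comm]
    have h2 : ∀ q ∈ Finset.range j, (∑ p ∈ Finset.range n, ext A p q) = if q < n then (1:ℤ) else 0 := by
      intro q _
      by_cases hq : q < n
      · rw [if_pos hq, show q = (⟨q, hq⟩ : Fin n).val from rfl, col_full ⟨q, hq⟩]
        exact hA.2.2.2.2 _
      · rw [if_neg hq]
        exact Finset.sum_eq_zero fun p _ => ext_zero_right (by omega)
    rw [Finset.sum_congr rfl h2, ite_sum_min]
  · intro i j hn
    have h1 : corner A i j = ∑ p ∈ Finset.range i, ∑ q ∈ Finset.range n, ext A p q := by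
      unfold corner
      exact Finset.sum_congr rfl fun p _ => sum_range_clamp hn p
    rw [h1]
    have h2 : ∀ p ∈ Finset.range i, (∑ q ∈ Finset.range n, ext A p q) = if p < n then (1:ℤ) else 0 := by
      intro p _
      by_cases hp : p < n
      · rw [if_pos hp, show p = (⟨p, hp⟩ : Fin n).val from rfl, row_full ⟨p, hp⟩]
        exact hA.2.2.2.1 _
      · rw [if_neg hp]
        exact Finset.sum_eq_zero fun q _ => ext_zero_left (by omega)
    rw [Finset.sum_congr rfl h2, ite_sum_min]
  · intro i j
    have h := corner_vstep A i j
    rcases lt_or_ge i n with hi | hi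
    · rcases rowsum_mem hA hi j with h' | h' <;> [left; right] <;> omega
    · have : ∑ q ∈ Finset.range j, ext A i q = 0 :=
        Finset.sum_eq_zero fun q _ => ext_zero_left hi
      left; omega
  · intro i j
    have h := corner_hstep A i j
    rcases lt_or_ge j n with hj | hj
    · rcases colsum_mem hA hj i with h' | h' <;> [left; right] <;> omega
    · have : ∑ p ∈ Finset.range i, ext A p j = 0 :=
        Finset.sum_eq_zero fun p _ => ext_zero_right hj
      left; omega

end ASMaux

namespace ASMaux

variable {n : ℕ}

lemma C.hb1 {c} (hc : C n c) : ∀ j, c 0 j = 0 := hc.1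
lemma C.hb2 {c} (hc : C n c) : ∀ i, c i 0 = 0 := hc.2.1
lemma C.hs1 {c} (hc : C n c) : ∀ i j, n ≤ i → c i j = (min j n : ℕ) := hc.2.2.1
lemma C.hs2 {c} (hc : C n c) : ∀ i j, n ≤ j → c i j = (min i n : ℕ) := hc.2.2.2.1
lemma C.hv {c} (hc : C n c) : ∀ i j, c (i+1) j = c i j ∨ c (i+1) j = c i j + 1 := hc.2.2.2.2.1
lemma C.hh {c} (hc : C n c) : ∀ i j, c i (j+1) = c i j ∨ c i (j+1) = c i j + 1 := hc.2.2.2.2.2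

lemma tele_h' {c} (hc : C n c) (i j : ℕ) :
    ∑ q ∈ Finset.range j, E c i q = c (i+1) j - c i j := by
  rw [tele_h, hc.hb2, hc.hb2]; ring

lemma tele_v' {c} (hc : C n c) (i j : ℕ) :
    ∑ p ∈ Finset.range i, E c p j = c i (j+1) - c i j := by
  rw [tele_v, hc.hb1, hc.hb1]; ring

lemma isASM_asmOf {c} (hc : C n c) : IsASM (asmOf n c) := by
  refine ⟨?_, ?_, ?_, ?_, ?_⟩
  · intro i j
    have h1 := hc.hh i.val j.val
    have h2 := hc.hh (i.val+1) j.val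
    simp only [asmOf, E]
    omega
  · intro i m
    have h1 : ∑ x ∈ Finset.Iic m, asmOf n c i x = ∑ q ∈ Finset.range (m.val+1), E c i.val q := by
      rw [← sum_Iic_fin m (fun q => E c i.val q)]
      exact Finset.sum_congr rfl fun x _ => by simp [asmOf]
    rw [h1, tele_h' hc]
    have := hc.hv i.val (m.val+1)
    omega
  · intro j m
    have h1 : ∑ x ∈ Finset.Iic m, asmOf n c x j = ∑ p ∈ Finset.range (m.val+1), E c p j.val := by
      rw [← sum_Iic_fin m (fun p => E c p j.val)]
      exact Finset.sum_congr rfl fun x _ => by simp [asmOf]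
    rw [h1, tele_v' hc]
    have := hc.hh (m.val+1) j.val
    omega
  · intro i
    have h1 : ∑ x, asmOf n c i x = ∑ q ∈ Finset.range n, E c i.val q := by
      rw [← Fin.sum_univ_eq_sum_range (fun q => E c i.val q) n]
      rfl
    rw [h1, tele_h' hc]
    have e1 := hc.hs2 i.val n le_rfl
    have e2 := hc.hs2 (i.val+1) n le_rfl
    have := i.isLt
    omega
  · intro j
    have h1 : ∑ x, asmOf n c x j = ∑ p ∈ Finset.range n, E c p j.val := by
      rw [← Fin.sum_univ_eq_sum_range (fun p => E c p j.val) n]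
      rfl
    rw [h1, tele_v' hc]
    have e1 := hc.hs1 n j.val le_rfl
    have e2 := hc.hs1 n (j.val+1) le_rfl
    have := j.isLt
    omega

lemma ext_asmOf {c} (hc : C n c) (p q : ℕ) : ext (asmOf n c) p q = E c p q := by
  by_cases h : p < n ∧ q < n
  · simp [ext, h, asmOf]
  · rw [ext]; rw [dif_neg h]
    rcases Nat.lt_or_ge p n with hp | hp
    · have hq : n ≤ q := by omega
      have e1 := hc.hs2 p q hq
      have e2 := hc.hs2 p (q+1) (by omega)
      have e3 := hc.hs2 (p+1) q hq
      have e4 := hc.hs2 (p+1) (q+1) (by omega)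
      simp only [E]
      omega
    · have e1 := hc.hs1 p q hp
      have e2 := hc.hs1 (p+1) q (by omega)
      have e3 := hc.hs1 p (q+1) hp
      have e4 := hc.hs1 (p+1) (q+1) (by omega)
      simp only [E]
      omega

lemma corner_asmOf {c} (hc : C n c) : corner (asmOf n c) = c := by
  funext i j
  have h1 : corner (asmOf n c) i j = ∑ p ∈ Finset.range i, ∑ q ∈ Finset.range j, E c p q := by
    unfold corner
    exact Finset.sum_congr rfl fun p _ => Finset.sum_congr rfl fun q _ => ext_asmOf hc p q
  rw [h1]
  have h2 : ∀ p ∈ Finset.range i, ∑ q ∈ Finset.range j, E c p q = c (p+1) j - c p j :=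
    fun p _ => tele_h' hc p j
  rw [Finset.sum_congr rfl h2]
  have h3 : ∀ i, ∑ p ∈ Finset.range i, (c (p+1) j - c p j) = c i j - c 0 j := by
    intro i
    induction i with
    | zero => simp
    | succ i ih => rw [Finset.sum_range_succ, ih]; ring
  rw [h3, hc.hb1]; ring

lemma asmOf_corner (A : Matrix (Fin n) (Fin n) ℤ) : asmOf n (corner A) = A := by
  funext i j
  show E (corner A) i.val j.val = A i j
  rw [E_corner, ext_eq]

lemma Nplus_eq (A : Matrix (Fin n) (Fin n) ℤ) : Nplus A = (plusF n (corner A)).card := by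
  unfold Nplus plusF
  apply Finset.card_bij (fun (p : Fin n × Fin n) _ => (p.1.val, p.2.val))
  · intro a ha
    simp only [Finset.mem_filter, Finset.mem_univ, true_and] at ha
    simp only [Finset.mem_filter, Finset.mem_product, Finset.mem_range]
    exact ⟨⟨a.1.isLt, a.2.isLt⟩, by rw [E_corner, ext_eq]; exact ha⟩
  · intro a _ b _ h
    simp only [Prod.mk.injEq] at h
    exact Prod.ext (Fin.ext h.1) (Fin.ext h.2)
  · intro b hb
    simp only [Finset.mem_filter, Finset.mem_product, Finset.mem_range] at hb
    refine ⟨(⟨b.1, hb.1.1⟩, ⟨b.2, hb.1.2⟩), ?_, rfl⟩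
    simp only [Finset.mem_filter, Finset.mem_univ, true_and]
    have := hb.2
    rw [E_corner] at this
    rwa [show ext A b.1 b.2 = A ⟨b.1, hb.1.1⟩ ⟨b.2, hb.1.2⟩ from by simp [ext, hb.1.1, hb.1.2]] at this

lemma Nminus_eq (A : Matrix (Fin n) (Fin n) ℤ) : Nminus A = (minusF n (corner A)).card := by
  unfold Nminus minusF
  apply Finset.card_bij (fun (p : Fin n × Fin n) _ => (p.1.val, p.2.val))
  · intro a ha
    simp only [Finset.mem_filter, Finset.mem_univ, true_and] at ha
    simp only [Finset.mem_filter, Finset.mem_product, Finset.mem_range]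
    exact ⟨⟨a.1.isLt, a.2.isLt⟩, by rw [E_corner, ext_eq]; exact ha⟩
  · intro a _ b _ h
    simp only [Prod.mk.injEq] at h
    exact Prod.ext (Fin.ext h.1) (Fin.ext h.2)
  · intro b hb
    simp only [Finset.mem_filter, Finset.mem_product, Finset.mem_range] at hb
    refine ⟨(⟨b.1, hb.1.1⟩, ⟨b.2, hb.1.2⟩), ?_, rfl⟩
    simp only [Finset.mem_filter, Finset.mem_univ, true_and]
    have := hb.2
    rw [E_corner] at this
    rwa [show ext A b.1 b.2 = A ⟨b.1, hb.1.1⟩ ⟨b.2, hb.1.2⟩ from by simp [ext, hb.1.1, hb.1.2]] at this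

end ASMaux

namespace ASMaux

variable {n : ℕ}

/-- The candidate order-(n+1) corner matrix compatible with `c`, with free choices `s`. -/
def Dex (n : ℕ) (c : ℕ → ℕ → ℤ) (s : Finset (ℕ × ℕ)) : ℕ → ℕ → ℤ := fun i j =>
  if i = 0 ∨ j = 0 then 0
  else if n + 1 ≤ i then (min j (n+1) : ℕ)
  else if n + 1 ≤ j then (min i (n+1) : ℕ)
  else max (max (c i j - 1) (c (i-1) (j-1))) (max (c (i-1) j) (c i (j-1)))
        + (if (i-1, j-1) ∈ s then 1 else 0)

/-- The candidate order-n corner matrix compatible with `d`, with free choices `s`. -/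
def Cex (n : ℕ) (d : ℕ → ℕ → ℤ) (s : Finset (ℕ × ℕ)) : ℕ → ℕ → ℤ := fun i j =>
  if i = 0 ∨ j = 0 then 0
  else if n ≤ i then (min j n : ℕ)
  else if n ≤ j then (min i n : ℕ)
  else min (min (d i j + 1) (d (i+1) (j+1))) (min (d i (j+1)) (d (i+1) j))
        - (if (i, j) ∈ s then 1 else 0)

/-- steps of the big matrix follow from compatibility. -/
lemma C_of_compat {c d : ℕ → ℕ → ℤ} (hc : C n c)
    (h0 : ∀ j, d 0 j = 0) (h0' : ∀ i, d i 0 = 0)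
    (hs : ∀ i j, n + 1 ≤ i → d i j = (min j (n+1) : ℕ))
    (hs' : ∀ i j, n + 1 ≤ j → d i j = (min i (n+1) : ℕ))
    (hco : Compat n c d) : C (n+1) d := by
  refine ⟨h0, h0', hs, hs', ?_, ?_⟩
  · -- vertical steps of d
    intro i j
    rcases Nat.eq_zero_or_pos j with hj | hj
    · subst hj; rw [h0', h0']; left; rfl
    rcases le_or_gt (n+1) j with hjn | hjn
    · rw [hs' _ _ hjn, hs' _ _ hjn]
      omega
    rcases le_or_gt (n+1) i with hin | hin
    · rw [hs _ _ hin, hs _ _ (by omega)]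
      left; rfl
    rcases eq_or_lt_of_le (Nat.lt_succ_iff.mp hin) with hi | hi
    · -- i = n
      subst hi
      rw [hs (i+1) j le_rfl]
      have h1 := (hco i (j-1) le_rfl (by omega)).2.2.1
      have h2 := (hco i (j-1) le_rfl (by omega)).2.2.2.2
      have e : j - 1 + 1 = j := by omega
      rw [e] at h1 h2
      have e1 := hc.hs1 i (j-1) le_rfl
      omega
    · -- i + 1 ≤ n
      have h1 := (hco i j (by omega) (by omega)).1
      have h2 := (hco i j (by omega) (by omega)).2.1
      have h3 := (hco i (j-1) (by omega) (by omega)).2.2.1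
      have h4 := (hco i (j-1) (by omega) (by omega)).2.2.2.2
      have e : j - 1 + 1 = j := by omega
      rw [e] at h3 h4
      omega
  · -- horizontal steps of d
    intro i j
    rcases Nat.eq_zero_or_pos i with hi | hi
    · subst hi; rw [h0, h0]; left; rfl
    rcases le_or_gt (n+1) i with hin | hin
    · rw [hs _ _ hin, hs _ _ hin]
      omega
    rcases le_or_gt (n+1) j with hjn | hjn
    · rw [hs' _ _ hjn, hs' _ _ (by omega)]
      left; rfl
    rcases eq_or_lt_of_le (Nat.lt_succ_iff.mp hjn) with hj | hj
    · -- j = n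
      subst hj
      rw [hs' i (j+1) le_rfl]
      have h1 := (hco (i-1) j (by omega) le_rfl).2.1
      have h2 := (hco (i-1) j (by omega) le_rfl).2.2.2.2
      have e : i - 1 + 1 = i := by omega
      rw [e] at h1 h2
      have e1 := hc.hs2 (i-1) j le_rfl
      omega
    · -- j + 1 ≤ n
      have h1 := (hco i j (by omega) (by omega)).1
      have h2 := (hco i j (by omega) (by omega)).2.2.1
      have h3 := (hco (i-1) j (by omega) (by omega)).2.1
      have h4 := (hco (i-1) j (by omega) (by omega)).2.2.2.2
      have e : i - 1 + 1 = i := by omega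
      rw [e] at h3 h4
      omega

/-- steps of the small matrix follow from compatibility. -/
lemma C_of_compat' {c d : ℕ → ℕ → ℤ} (hd : C (n+1) d)
    (h0 : ∀ j, c 0 j = 0) (h0' : ∀ i, c i 0 = 0)
    (hs : ∀ i j, n ≤ i → c i j = (min j n : ℕ))
    (hs' : ∀ i j, n ≤ j → c i j = (min i n : ℕ))
    (hco : Compat n c d) : C n c := by
  refine ⟨h0, h0', hs, hs', ?_, ?_⟩
  · -- vertical steps of c
    intro i j
    rcases le_or_gt n j with hjn | hjn
    · rw [hs' _ _ hjn, hs' _ _ hjn]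
      omega
    rcases le_or_gt n i with hin | hin
    · rw [hs _ _ hin, hs _ _ (by omega)]
      left; rfl
    -- i + 1 ≤ n, j ≤ n - 1
    have h1 := (hco (i+1) j (by omega) (by omega)).1
    have h2 := (hco i j (by omega) (by omega)).2.1
    have h3 := (hco (i+1) j (by omega) (by omega)).2.2.1
    have h4 := (hco i j (by omega) (by omega)).2.2.2.2
    omega
  · -- horizontal steps of c
    intro i j
    rcases le_or_gt n i with hin | hin
    · rw [hs _ _ hin, hs _ _ hin]
      omega
    rcases le_or_gt n j with hjn | hjn
    · rw [hs' _ _ hjn, hs' _ _ (by omega)]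
      left; rfl
    have h1 := (hco i (j+1) (by omega) (by omega)).1
    have h2 := (hco i j (by omega) (by omega)).2.2.1
    have h3 := (hco i (j+1) (by omega) (by omega)).2.1
    have h4 := (hco i j (by omega) (by omega)).2.2.2.2
    omega

end ASMaux

namespace ASMaux

variable {n : ℕ} {c d : ℕ → ℕ → ℤ} {s : Finset (ℕ × ℕ)}

lemma Dex_b (i j : ℕ) (h : i = 0 ∨ j = 0) : Dex n c s i j = 0 := by
  unfold Dex; rw [if_pos h]

lemma Dex_stab1 (i j : ℕ) (h : n + 1 ≤ i) : Dex n c s i j = (min j (n+1) : ℕ) := by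
  unfold Dex
  rcases Nat.eq_zero_or_pos j with hj | hj
  · subst hj; rw [if_pos (Or.inr rfl)]; simp
  · rw [if_neg (by omega), if_pos h]

lemma Dex_stab2 (i j : ℕ) (h : n + 1 ≤ j) : Dex n c s i j = (min i (n+1) : ℕ) := by
  unfold Dex
  rcases Nat.eq_zero_or_pos i with hi | hi
  · subst hi; rw [if_pos (Or.inl rfl)]; simp
  · rcases le_or_gt (n+1) i with h2 | h2
    · rw [if_neg (by omega), if_pos h2]
      congr 1
      omega
    · rw [if_neg (by omega), if_neg (by omega), if_pos h]

lemma Dex_int (i j : ℕ) (hi : 1 ≤ i) (hi2 : i ≤ n) (hj : 1 ≤ j) (hj2 : j ≤ n) :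
    Dex n c s i j = max (max (c i j - 1) (c (i-1) (j-1))) (max (c (i-1) j) (c i (j-1)))
        + (if (i-1, j-1) ∈ s then 1 else 0) := by
  unfold Dex
  rw [if_neg (by omega), if_neg (by omega), if_neg (by omega)]

lemma mem_plusF {p q : ℕ} (h : (p, q) ∈ plusF n c) : p < n ∧ q < n ∧ E c p q = 1 := by
  simp only [plusF, Finset.mem_filter, Finset.mem_product, Finset.mem_range] at h
  exact ⟨h.1.1, h.1.2, h.2⟩

lemma compat_Dex (hc : C n c) (hsub : s ⊆ plusF n c) : Compat n c (Dex n c s) := by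
  have hplus : ∀ p q, (p, q) ∈ s → E c p q = 1 := fun p q h => (mem_plusF (hsub h)).2.2
  intro i j hi hj
  refine ⟨?_, ?_, ?_, ?_⟩
  · -- target (i, j)
    by_cases h0 : i = 0 ∨ j = 0
    · rw [Dex_b _ _ h0]
      rcases h0 with h | h <;> subst h <;> simp [hc.hb1, hc.hb2]
    · push_neg at h0
      rw [Dex_int i j (by omega) hi (by omega) hj]
      obtain ⟨i', rfl⟩ : ∃ i', i = i' + 1 := ⟨i - 1, by omega⟩
      obtain ⟨j', rfl⟩ : ∃ j', j = j' + 1 := ⟨j - 1, by omega⟩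
      simp only [Nat.add_sub_cancel]
      have f1 := hc.hv i' j'
      have f2 := hc.hv i' (j'+1)
      have f3 := hc.hh i' j'
      have f4 := hc.hh (i'+1) j'
      by_cases hm : (i', j') ∈ s
      · have hE := hplus _ _ hm
        simp only [E] at hE
        rw [if_pos hm]
        omega
      · rw [if_neg hm]
        omega
  · -- target (i+1, j)
    rcases Nat.eq_zero_or_pos j with hj0 | hj0
    · subst hj0
      rw [Dex_b _ _ (Or.inr rfl), hc.hb2]
      omega
    rcases eq_or_lt_of_le hi with hin | hin
    · subst hin
      rw [Dex_stab1 _ _ le_rfl, hc.hs1 i j le_rfl]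
      omega
    · rw [Dex_int (i+1) j (by omega) (by omega) (by omega) hj]
      obtain ⟨j', rfl⟩ : ∃ j', j = j' + 1 := ⟨j - 1, by omega⟩
      simp only [Nat.add_sub_cancel]
      have f1 := hc.hv i j'
      have f2 := hc.hv i (j'+1)
      have f3 := hc.hh i j'
      have f4 := hc.hh (i+1) j'
      by_cases hm : (i, j') ∈ s
      · have hE := hplus _ _ hm
        simp only [E] at hE
        rw [if_pos hm]
        omega
      · rw [if_neg hm]
        omega
  · -- target (i, j+1)
    rcases Nat.eq_zero_or_pos i with hi0 | hi0
    · subst hi0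
      rw [Dex_b _ _ (Or.inl rfl), hc.hb1]
      omega
    rcases eq_or_lt_of_le hj with hjn | hjn
    · subst hjn
      rw [Dex_stab2 _ _ le_rfl, hc.hs2 i j le_rfl]
      omega
    · rw [Dex_int i (j+1) hi0 hi (by omega) (by omega)]
      obtain ⟨i', rfl⟩ : ∃ i', i = i' + 1 := ⟨i - 1, by omega⟩
      simp only [Nat.add_sub_cancel]
      have f1 := hc.hv i' j
      have f2 := hc.hv i' (j+1)
      have f3 := hc.hh i' j
      have f4 := hc.hh (i'+1) j
      by_cases hm : (i', j) ∈ s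
      · have hE := hplus _ _ hm
        simp only [E] at hE
        rw [if_pos hm]
        omega
      · rw [if_neg hm]
        omega
  · -- target (i+1, j+1)
    rcases eq_or_lt_of_le hi with hin | hin
    · subst hin
      rw [Dex_stab1 _ _ le_rfl, hc.hs1 i j le_rfl]
      omega
    rcases eq_or_lt_of_le hj with hjn | hjn
    · subst hjn
      rw [Dex_stab2 _ _ le_rfl, hc.hs2 i j le_rfl]
      omega
    · rw [Dex_int (i+1) (j+1) (by omega) (by omega) (by omega) (by omega)]
      simp only [Nat.add_sub_cancel]
      have f1 := hc.hv i j
      have f2 := hc.hv i (j+1)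
      have f3 := hc.hh i j
      have f4 := hc.hh (i+1) j
      by_cases hm : (i, j) ∈ s
      · have hE := hplus _ _ hm
        simp only [E] at hE
        rw [if_pos hm]
        omega
      · rw [if_neg hm]
        omega

lemma C_Dex (hc : C n c) (hsub : s ⊆ plusF n c) : C (n+1) (Dex n c s) :=
  C_of_compat hc (fun j => Dex_b 0 j (Or.inl rfl)) (fun i => Dex_b i 0 (Or.inr rfl))
    Dex_stab1 Dex_stab2 (compat_Dex hc hsub)

end ASMaux

namespace ASMaux

variable {n : ℕ} {c d : ℕ → ℕ → ℤ} {s : Finset (ℕ × ℕ)}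

def sigA (n : ℕ) (c d : ℕ → ℕ → ℤ) : Finset (ℕ × ℕ) :=
  (plusF n c).filter fun p => d (p.1+1) (p.2+1) = c p.1 p.2 + 1

lemma Dex_sigA (hc : C n c) (hd : C (n+1) d) (hco : Compat n c d) :
    Dex n c (sigA n c d) = d := by
  funext i j
  by_cases h0 : i = 0 ∨ j = 0
  · rw [Dex_b _ _ h0]
    rcases h0 with h | h <;> subst h <;> simp [hd.hb1, hd.hb2]
  push_neg at h0
  rcases le_or_gt (n+1) i with hin | hin
  · rw [Dex_stab1 _ _ hin, hd.hs1 _ _ hin]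
  rcases le_or_gt (n+1) j with hjn | hjn
  · rw [Dex_stab2 _ _ hjn, hd.hs2 _ _ hjn]
  obtain ⟨i', rfl⟩ : ∃ i', i = i' + 1 := ⟨i - 1, by omega⟩
  obtain ⟨j', rfl⟩ : ∃ j', j = j' + 1 := ⟨j - 1, by omega⟩
  rw [Dex_int (i'+1) (j'+1) (by omega) (by omega) (by omega) (by omega)]
  simp only [Nat.add_sub_cancel]
  have f1 := hc.hv i' j'
  have f2 := hc.hv i' (j'+1)
  have f3 := hc.hh i' j'
  have f4 := hc.hh (i'+1) j'
  have g1 := hco (i'+1) (j'+1) (by omega) (by omega)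
  have g2 := (hco i' j' (by omega) (by omega)).2.2.2.2
  have g3 := (hco i' (j'+1) (by omega) (by omega)).2.1
  have g4 := (hco (i'+1) j' (by omega) (by omega)).2.2.1
  by_cases hE : E c i' j' = 1
  · have hmem : (i', j') ∈ plusF n c := by
      simp only [plusF, Finset.mem_filter, Finset.mem_product, Finset.mem_range]
      exact ⟨⟨by omega, by omega⟩, hE⟩
    simp only [E] at hE
    by_cases hd2 : d (i'+1) (j'+1) = c i' j' + 1
    · have hms : (i', j') ∈ sigA n c d := Finset.mem_filter.mpr ⟨hmem, hd2⟩
      rw [if_pos hms]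
      omega
    · have hns : (i', j') ∉ sigA n c d := fun h => hd2 (Finset.mem_filter.mp h).2
      rw [if_neg hns]
      omega
  · have hns : (i', j') ∉ sigA n c d := fun h => hE (mem_plusF (Finset.mem_filter.mp h).1).2.2
    rw [if_neg hns]
    simp only [E] at hE
    omega

lemma sigA_Dex (hc : C n c) (hsub : s ⊆ plusF n c) : sigA n c (Dex n c s) = s := by
  ext ⟨p, q⟩
  by_cases hmem : (p, q) ∈ plusF n c
  · have h1 := mem_plusF hmem
    have hval : Dex n c s (p+1) (q+1) = c p q + (if (p, q) ∈ s then 1 else 0) := by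
      rw [Dex_int (p+1) (q+1) (by omega) (by omega) (by omega) (by omega)]
      simp only [Nat.add_sub_cancel]
      have f1 := hc.hv p q
      have f2 := hc.hv p (q+1)
      have f3 := hc.hh p q
      have f4 := hc.hh (p+1) q
      have hE := h1.2.2
      simp only [E] at hE
      by_cases hm : (p, q) ∈ s <;> simp only [hm, if_true, if_false] <;> omega
    simp only [sigA, Finset.mem_filter, hmem, true_and, hval]
    by_cases hm : (p, q) ∈ s <;> simp [hm]
  · constructor
    · intro h
      exact absurd ((Finset.mem_filter.mp h).1) hmem
    · intro h
      exact absurd (hsub h) hmem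

lemma cardA (hc : C n c) {T : Finset (ℕ → ℕ → ℤ)} (hT : ∀ d, d ∈ T ↔ C (n+1) d) :
    (T.filter fun d => Compat n c d).card = 2 ^ (plusF n c).card := by
  rw [← Finset.card_powerset]
  apply Finset.card_bij' (i := fun d _ => sigA n c d) (j := fun s _ => Dex n c s)
  · intro d hd
    exact Finset.mem_powerset.mpr (Finset.filter_subset _ _)
  · intro s hs
    have hsub := Finset.mem_powerset.mp hs
    exact Finset.mem_filter.mpr ⟨(hT _).mpr (C_Dex hc hsub), compat_Dex hc hsub⟩
  · intro d hd
    have h := Finset.mem_filter.mp hd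
    exact Dex_sigA hc ((hT _).mp h.1) h.2
  · intro s hs
    exact sigA_Dex hc (Finset.mem_powerset.mp hs)

end ASMaux

namespace ASMaux

variable {n : ℕ} {c d : ℕ → ℕ → ℤ} {s : Finset (ℕ × ℕ)}

lemma mem_minusF {p q : ℕ} (h : (p, q) ∈ minusF (n+1) d) :
    p < n + 1 ∧ q < n + 1 ∧ E d p q = -1 := by
  simp only [minusF, Finset.mem_filter, Finset.mem_product, Finset.mem_range] at h
  exact ⟨h.1.1, h.1.2, h.2⟩

lemma minus_interior (hd : C (n+1) d) {p q : ℕ} (h : (p, q) ∈ minusF (n+1) d) :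
    1 ≤ p ∧ p ≤ n - 1 ∧ 1 ≤ q ∧ q ≤ n - 1 ∧ 2 ≤ n := by
  obtain ⟨hp, hq, hE⟩ := mem_minusF h
  simp only [E] at hE
  have b1 := hd.hb1 q
  have b2 := hd.hb1 (q+1)
  have b3 := hd.hb2 p
  have b4 := hd.hb2 (p+1)
  have f1 := hd.hh (p+1) q
  have f2 := hd.hh p q
  have f3 := hd.hv p (q+1)
  have f4 := hd.hv p q
  have s1 := hd.hs1 (n+1) q (le_refl _)
  have s2 := hd.hs1 (n+1) (q+1) (le_refl _)
  have s3 := hd.hs2 p (n+1) (le_refl _)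
  have s4 := hd.hs2 (p+1) (n+1) (le_refl _)
  have hp0 : p ≠ 0 := by
    intro h; subst h; omega
  have hpn : p ≠ n := by
    intro h; subst h; omega
  have hq0 : q ≠ 0 := by
    intro h; subst h; omega
  have hqn : q ≠ n := by
    intro h; subst h; omega
  refine ⟨by omega, by omega, by omega, by omega, by omega⟩

lemma Cex_b (i j : ℕ) (h : i = 0 ∨ j = 0) : Cex n d s i j = 0 := by
  unfold Cex; rw [if_pos h]

lemma Cex_stab1 (i j : ℕ) (h : n ≤ i) : Cex n d s i j = (min j n : ℕ) := by
  unfold Cex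
  rcases Nat.eq_zero_or_pos j with hj | hj
  · subst hj; rw [if_pos (Or.inr rfl)]; simp
  · rcases Nat.eq_zero_or_pos i with hi | hi
    · subst hi
      rw [if_pos (Or.inl rfl)]
      have : n = 0 := by omega
      simp [this]
    · rw [if_neg (by omega), if_pos h]

lemma Cex_stab2 (i j : ℕ) (h : n ≤ j) : Cex n d s i j = (min i n : ℕ) := by
  unfold Cex
  rcases Nat.eq_zero_or_pos i with hi | hi
  · subst hi; rw [if_pos (Or.inl rfl)]; simp
  · rcases le_or_gt n i with h2 | h2
    · rcases Nat.eq_zero_or_pos j with hj | hj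
      · subst hj
        rw [if_pos (Or.inr rfl)]
        have : n = 0 := by omega
        simp [this]
      · rw [if_neg (by omega), if_pos h2]
        congr 1
        omega
    · rcases Nat.eq_zero_or_pos j with hj | hj
      · subst hj
        rw [if_pos (Or.inr rfl)]
        omega
      · rw [if_neg (by omega), if_neg (by omega), if_pos h]

lemma Cex_int (i j : ℕ) (hi : 1 ≤ i) (hi2 : i ≤ n - 1) (hj : 1 ≤ j) (hj2 : j ≤ n - 1)
    (hn : 1 ≤ n) :
    Cex n d s i j = min (min (d i j + 1) (d (i+1) (j+1))) (min (d i (j+1)) (d (i+1) j))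
        - (if (i, j) ∈ s then 1 else 0) := by
  unfold Cex
  rw [if_neg (by omega), if_neg (by omega), if_neg (by omega)]

lemma compat_Cex (hd : C (n+1) d) (hsub : s ⊆ minusF (n+1) d) : Compat n (Cex n d s) d := by
  have hminus : ∀ p q, (p, q) ∈ s → E d p q = -1 := fun p q h => (mem_minusF (hsub h)).2.2
  intro i j hi hj
  by_cases h0 : i = 0 ∨ j = 0
  · rw [Cex_b _ _ h0]
    rcases h0 with h | h <;> subst h
    · have b1 := hd.hb1 j
      have b2 := hd.hb1 (j+1)
      have f1 := hd.hv 0 j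
      have f2 := hd.hv 0 (j+1)
      refine ⟨by omega, by omega, by omega, by omega⟩
    · have b1 := hd.hb2 i
      have b2 := hd.hb2 (i+1)
      have f1 := hd.hh i 0
      have f2 := hd.hh (i+1) 0
      refine ⟨by omega, by omega, by omega, by omega⟩
  push_neg at h0
  rcases le_or_gt n i with hin | hin
  · have hieq : i = n := by omega
    subst hieq
    rw [Cex_stab1 _ _ le_rfl]
    have s1 := hd.hs1 (i+1) j (by omega)
    have s2 := hd.hs1 (i+1) (j+1) (by omega)
    have f1 := hd.hv i j
    have f2 := hd.hv i (j+1)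
    refine ⟨⟨by omega, by omega⟩, ⟨by omega, by omega⟩, ⟨by omega, by omega⟩, by omega, by omega⟩
  rcases le_or_gt n j with hjn | hjn
  · have hjeq : j = n := by omega
    subst hjeq
    rw [Cex_stab2 _ _ le_rfl]
    have s1 := hd.hs2 i (j+1) (by omega)
    have s2 := hd.hs2 (i+1) (j+1) (by omega)
    have f1 := hd.hh i j
    have f2 := hd.hh (i+1) j
    refine ⟨⟨by omega, by omega⟩, ⟨by omega, by omega⟩, ⟨by omega, by omega⟩, by omega, by omega⟩
  · rw [Cex_int i j (by omega) (by omega) (by omega) (by omega) (by omega)]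
    have f1 := hd.hv i j
    have f2 := hd.hv i (j+1)
    have f3 := hd.hh i j
    have f4 := hd.hh (i+1) j
    by_cases hm : (i, j) ∈ s
    · have hE := hminus _ _ hm
      simp only [E] at hE
      rw [if_pos hm]
      refine ⟨⟨by omega, by omega⟩, ⟨by omega, by omega⟩, ⟨by omega, by omega⟩, by omega, by omega⟩
    · rw [if_neg hm]
      refine ⟨⟨by omega, by omega⟩, ⟨by omega, by omega⟩, ⟨by omega, by omega⟩, by omega, by omega⟩

lemma C_Cex (hd : C (n+1) d) (hsub : s ⊆ minusF (n+1) d) : C n (Cex n d s) :=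
  C_of_compat' hd (fun j => Cex_b 0 j (Or.inl rfl)) (fun i => Cex_b i 0 (Or.inr rfl))
    Cex_stab1 Cex_stab2 (compat_Cex hd hsub)

def sigB (n : ℕ) (d c : ℕ → ℕ → ℤ) : Finset (ℕ × ℕ) :=
  (minusF (n+1) d).filter fun p => c p.1 p.2 = d p.1 p.2

lemma Cex_sigB (hc : C n c) (hd : C (n+1) d) (hco : Compat n c d) :
    Cex n d (sigB n d c) = c := by
  funext i j
  by_cases h0 : i = 0 ∨ j = 0
  · rw [Cex_b _ _ h0]
    rcases h0 with h | h <;> subst h <;> simp [hc.hb1, hc.hb2]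
  push_neg at h0
  rcases le_or_gt n i with hin | hin
  · rw [Cex_stab1 _ _ hin, hc.hs1 _ _ hin]
  rcases le_or_gt n j with hjn | hjn
  · rw [Cex_stab2 _ _ hjn, hc.hs2 _ _ hjn]
  rw [Cex_int i j (by omega) (by omega) (by omega) (by omega) (by omega)]
  have f1 := hd.hv i j
  have f2 := hd.hv i (j+1)
  have f3 := hd.hh i j
  have f4 := hd.hh (i+1) j
  have g1 := hco i j (by omega) (by omega)
  by_cases hE : E d i j = -1
  · have hmem : (i, j) ∈ minusF (n+1) d := by
      simp only [minusF, Finset.mem_filter, Finset.mem_product, Finset.mem_range]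
      exact ⟨⟨by omega, by omega⟩, hE⟩
    simp only [E] at hE
    by_cases hc2 : c i j = d i j
    · have hms : (i, j) ∈ sigB n d c := Finset.mem_filter.mpr ⟨hmem, hc2⟩
      rw [if_pos hms]
      omega
    · have hns : (i, j) ∉ sigB n d c := fun h => hc2 (Finset.mem_filter.mp h).2
      rw [if_neg hns]
      omega
  · have hns : (i, j) ∉ sigB n d c := fun h => hE (mem_minusF (Finset.mem_filter.mp h).1).2.2
    rw [if_neg hns]
    simp only [E] at hE
    omega

lemma sigB_Cex (hd : C (n+1) d) (hsub : s ⊆ minusF (n+1) d) : sigB n d (Cex n d s) = s := by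
  ext ⟨p, q⟩
  by_cases hmem : (p, q) ∈ minusF (n+1) d
  · obtain ⟨hp1, hp2, hq1, hq2, hn2⟩ := minus_interior hd hmem
    have hE := (mem_minusF hmem).2.2
    have hval : Cex n d s p q = d p q + 1 - (if (p, q) ∈ s then 1 else 0) := by
      rw [Cex_int p q (by omega) (by omega) (by omega) (by omega) (by omega)]
      have f1 := hd.hv p q
      have f2 := hd.hv p (q+1)
      have f3 := hd.hh p q
      have f4 := hd.hh (p+1) q
      simp only [E] at hE
      by_cases hm : (p, q) ∈ s <;> simp only [hm, if_true, if_false] <;> omega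
    simp only [sigB, Finset.mem_filter, hmem, true_and, hval]
    by_cases hm : (p, q) ∈ s <;> simp [hm]
  · constructor
    · intro h
      exact absurd ((Finset.mem_filter.mp h).1) hmem
    · intro h
      exact absurd (hsub h) hmem

lemma cardB (hd : C (n+1) d) {S : Finset (ℕ → ℕ → ℤ)} (hS : ∀ c, c ∈ S ↔ C n c) :
    (S.filter fun c => Compat n c d).card = 2 ^ (minusF (n+1) d).card := by
  rw [← Finset.card_powerset]
  apply Finset.card_bij' (i := fun c _ => sigB n d c) (j := fun s _ => Cex n d s)
  · intro c hc
    exact Finset.mem_powerset.mpr (Finset.filter_subset _ _)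
  · intro s hs
    have hsub := Finset.mem_powerset.mp hs
    exact Finset.mem_filter.mpr ⟨(hS _).mpr (C_Cex hd hsub), compat_Cex hd hsub⟩
  · intro c hc
    have h := Finset.mem_filter.mp hc
    exact Cex_sigB ((hS _).mp h.1) hd h.2
  · intro s hs
    exact sigB_Cex hd (Finset.mem_powerset.mp hs)

end ASMaux

namespace ASMaux

variable {n : ℕ}

lemma finite_ASM (n : ℕ) : {A : Matrix (Fin n) (Fin n) ℤ | IsASM A}.Finite := by
  have hT : ({-1, 0, 1} : Set ℤ).Finite := Set.toFinite _
  have h : (Set.pi (Set.univ : Set (Fin n)) fun _ =>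
      Set.pi (Set.univ : Set (Fin n)) fun _ => ({-1, 0, 1} : Set ℤ)).Finite :=
    Set.Finite.pi fun _ => Set.Finite.pi fun _ => hT
  apply h.subset
  intro A hA
  simp only [Set.mem_pi, Set.mem_univ, forall_true_left]
  intro i j
  rcases hA.1 i j with h | h | h <;> simp [h]

lemma Cset_eq (n : ℕ) :
    {c : ℕ → ℕ → ℤ | C n c} = corner '' {A : Matrix (Fin n) (Fin n) ℤ | IsASM A} := by
  ext c
  constructor
  · intro hc
    exact ⟨asmOf n c, isASM_asmOf hc, corner_asmOf hc⟩
  · rintro ⟨A, hA, rfl⟩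
    exact isASM_corner hA

lemma finite_C (n : ℕ) : {c : ℕ → ℕ → ℤ | C n c}.Finite := by
  rw [Cset_eq]
  exact (finite_ASM n).image _

/-- transfer of the weighted sum from ASMs to corner matrices -/
lemma sum_plus_transfer (n : ℕ) :
    (∑ᶠ A ∈ {A : Matrix (Fin n) (Fin n) ℤ | IsASM A}, 2 ^ Nplus A) =
      ∑ c ∈ (finite_C n).toFinset, 2 ^ (plusF n c).card := by
  rw [← Set.Finite.coe_toFinset (finite_ASM n), finsum_mem_coe_finset]
  apply Finset.sum_nbij' (i := fun A => corner A) (j := fun c => asmOf n c)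
  · intro A hA
    rw [Set.Finite.mem_toFinset] at hA ⊢
    exact isASM_corner hA
  · intro c hc
    rw [Set.Finite.mem_toFinset] at hc ⊢
    exact isASM_asmOf hc
  · intro A hA
    exact asmOf_corner A
  · intro c hc
    rw [Set.Finite.mem_toFinset] at hc
    exact corner_asmOf hc
  · intro A hA
    rw [Nplus_eq]

lemma sum_minus_transfer (n : ℕ) :
    (∑ᶠ A ∈ {A : Matrix (Fin n) (Fin n) ℤ | IsASM A}, 2 ^ Nminus A) =
      ∑ c ∈ (finite_C n).toFinset, 2 ^ (minusF n c).card := by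
  rw [← Set.Finite.coe_toFinset (finite_ASM n), finsum_mem_coe_finset]
  apply Finset.sum_nbij' (i := fun A => corner A) (j := fun c => asmOf n c)
  · intro A hA
    rw [Set.Finite.mem_toFinset] at hA ⊢
    exact isASM_corner hA
  · intro c hc
    rw [Set.Finite.mem_toFinset] at hc ⊢
    exact isASM_asmOf hc
  · intro A hA
    exact asmOf_corner A
  · intro c hc
    rw [Set.Finite.mem_toFinset] at hc
    exact corner_asmOf hc
  · intro A hA
    rw [Nminus_eq]

end ASMaux

open ASMaux in
/-- For every `n ≥ 1`, `Σ_{A ∈ 𝒜ₙ} 2^{N₊(A)} = Σ_{A ∈ 𝒜_{n+1}} 2^{N₋(A)}`. -/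
theorem two_enum_plus_eq_two_enum_minus (n : ℕ) (hn : 1 ≤ n) :
    (∑ᶠ A ∈ {A : Matrix (Fin n) (Fin n) ℤ | IsASM A}, 2 ^ Nplus A) =
      ∑ᶠ A ∈ {A : Matrix (Fin (n + 1)) (Fin (n + 1)) ℤ | IsASM A}, 2 ^ Nminus A := by
  classical
  rw [sum_plus_transfer n, sum_minus_transfer (n+1)]
  set S := (finite_C n).toFinset with hSdef
  set T := (finite_C (n+1)).toFinset with hTdef
  have hS : ∀ c, c ∈ S ↔ C n c := fun c => Set.Finite.mem_toFinset _
  have hT : ∀ d, d ∈ T ↔ C (n+1) d := fun d => Set.Finite.mem_toFinset _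
  have step1 : ∀ c ∈ S, (2:ℕ) ^ (plusF n c).card = ∑ d ∈ T, if Compat n c d then 1 else 0 := by
    intro c hc
    rw [← cardA ((hS c).mp hc) hT, Finset.card_filter]
  have step2 : ∀ d ∈ T, (2:ℕ) ^ (minusF (n+1) d).card = ∑ c ∈ S, if Compat n c d then 1 else 0 := by
    intro d hd
    rw [← cardB ((hT d).mp hd) hS, Finset.card_filter]
  rw [Finset.sum_congr rfl step1, Finset.sum_comm, ← Finset.sum_congr rfl step2]
end

section
/- For every integer n ≥ 1, Σ_{A ∈ 𝒜_n} 2^{N₊(A)} = 2^{n(n+1)/2}. -/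
/-!
Reading an ASM row by row and recording, after the first `j` rows, the set of columns whose
partial sum is `1` gives a bijection between ASMs of order `n` and monotone triangles: chains
`∅ = c₀, c₁, …, cₙ = {0, …, n - 1}` with `#cⱼ = j` and consecutive rows interlacing. The `+1`
entries of row `i` are exactly `cᵢ₊₁ \ cᵢ`.

With `Δ(S) = ∏_{x < y in S} (y - x)`, the heart of the proof is the one-step identity
`k! · ∑_{S ≺ T, #S = k} 2^#(T \ S) Δ(S) = 2^(k+1) Δ(T)` for `#T = k + 1`. By induction the
triangles with top row `T`, `#T = k`, have total weight `2^((k+1) choose 2) Δ(T) / ∏_{j<k} j!`,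
and `Δ({0, …, n - 1}) = ∏_{j<n} j!`.

For the identity, write `2^#(T \ S) = 2 ∏_{x ∈ S} (1 if x ∈ T else 2)`; interlacing means
`tᵢ ≤ sᵢ ≤ tᵢ₊₁`, so each `sᵢ` runs over `[tᵢ, tᵢ₊₁]` with trapezoid weights `1, 2, …, 2, 1`.
Since `2^k k! Δ(S) = det (q_j(sᵢ))` for `q_j = (X + 2)^(j+1) - X^(j+1)`, multilinearity turns the
sum into the determinant of the weighted row sums, which telescope to `Q_j(tᵢ₊₁) - Q_j(tᵢ)` for a
polynomial `Q_j` of degree `j + 1` with leading coefficient `4`; that determinant is `4^k Δ(T)`.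
-/

open Finset Polynomial Matrix
open scoped Nat

section Determinants

variable {R : Type*} [CommRing R]

theorem det_eval_polynomials_eq_prod_coeff_mul_det_vandermonde {k : ℕ} (P : Fin k → R[X])
    (hP : ∀ j, (P j).natDegree ≤ j) (v : Fin k → R) :
    (of fun i j => (P j).eval (v i)).det = (∏ j, (P j).coeff j) * (vandermonde v).det := by
  rw [eval_matrixOfPolynomials_eq_vandermonde_mul_matrixOfPolynomials v P hP, det_mul,
    det_of_isUpperTriangular (matrixOfPolynomials_blockTriangular P hP), mul_comm]
  rfl

theorem det_eq_det_succ_sub_castSucc {k : ℕ} (M : Matrix (Fin (k + 1)) (Fin (k + 1)) R)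
    (hM : ∀ i, M i 0 = 1) :
    M.det = (of fun i j : Fin k => M i.succ j.succ - M i.castSucc j.succ).det := by
  set B : Matrix (Fin (k + 1)) (Fin (k + 1)) R :=
    of (Fin.cons (M 0) fun i => M i.succ - M i.castSucc)
  have hMB : M.det = B.det :=
    det_eq_of_forall_row_eq_smul_add_pred (fun _ => 1) (fun _ => rfl) (fun i j => by simp [B])
  rw [hMB, det_succ_column_zero, Fin.sum_univ_succ, sum_eq_zero fun i _ => by simp [B, hM]]
  simp only [B, of_apply, Fin.cons_zero, hM, Fin.succAbove_zero, Fin.val_zero, pow_zero,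
    mul_one, one_mul, add_zero]
  rfl

theorem sum_piFinset_det_eq_det_sum {ι : Type*} [DecidableEq ι] {k : ℕ}
    (g : Fin k → ι → Fin k → R) (A : Fin k → Finset ι) :
    ∑ s ∈ Fintype.piFinset A, (of fun i => g i (s i)).det =
      (of fun i => ∑ x ∈ A i, g i x).det :=
  (detRowAlternating.map_sum_finset g A).symm

theorem sum_piFinset_filter_strictMono_det {α : Type*} [LinearOrder α] {k : ℕ}
    (g : α → Fin k → R) (A : Fin k → Finset α) (hA : ∀ s ∈ Fintype.piFinset A, Monotone s) :
    ∑ s ∈ Fintype.piFinset A with StrictMono s, (of fun i => g (s i)).det =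
      ∑ s ∈ Fintype.piFinset A, (of fun i => g (s i)).det := by
  refine sum_subset (filter_subset _ _) fun s hsA hs => ?_
  obtain ⟨i, j, hij, hji⟩ : ∃ i j, i < j ∧ s j ≤ s i := by
    have hs : ¬ StrictMono s := fun h => hs (mem_filter.2 ⟨hsA, h⟩)
    simpa only [StrictMono, not_forall, not_lt, exists_prop] using hs
  exact det_zero_of_row_eq hij.ne
    (show g (s i) = g (s j) by rw [le_antisymm (hA s hsA hij.le) hji])

end Determinants

section TrapezoidPolynomials

theorem sum_Ico_add_sum_Ioc_eq_sub {M : Type*} [AddCommGroup M] (f F : ℕ → M)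
    (hF : ∀ x, f x + f (x + 1) = F (x + 1) - F x) {a b : ℕ} (hab : a ≤ b) :
    ∑ x ∈ Ico a b, f x + ∑ x ∈ Ioc a b, f x = F b - F a := by
  induction b, hab using Nat.le_induction with
  | base => simp
  | succ b hab ih =>
    rw [sum_Ico_succ_top hab, sum_Ioc_succ_top hab, ← sub_add_sub_cancel _ (F b), ← ih, ← hF]
    abel

noncomputable def trapezoidPoly (j : ℕ) : ℤ[X] := (X + C 2) ^ (j + 1) - X ^ (j + 1)

noncomputable def trapezoidPrimitive (j : ℕ) : ℤ[X] :=
  X ^ (j + 1) + 2 * (X + C 1) ^ (j + 1) + (X + C 2) ^ (j + 1)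

theorem eval_trapezoidPoly_add_eval_succ (j : ℕ) (x : ℤ) :
    (trapezoidPoly j).eval x + (trapezoidPoly j).eval (x + 1) =
      (trapezoidPrimitive j).eval (x + 1) - (trapezoidPrimitive j).eval x := by
  simp only [trapezoidPoly, trapezoidPrimitive, eval_add, eval_sub, eval_mul, eval_pow, eval_X,
    eval_C, eval_ofNat]
  ring

theorem coeff_trapezoidPoly (j l : ℕ) :
    (trapezoidPoly j).coeff l =
      2 ^ (j + 1 - l) * (j + 1).choose l - if l = j + 1 then 1 else 0 := by
  rw [trapezoidPoly, coeff_sub, coeff_X_add_C_pow, coeff_X_pow]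

theorem natDegree_trapezoidPoly_le (j : ℕ) : (trapezoidPoly j).natDegree ≤ j := by
  rw [natDegree_le_iff_coeff_eq_zero]
  intro l hl
  rw [coeff_trapezoidPoly]
  rcases (Nat.succ_le_of_lt hl).eq_or_lt with rfl | hl
  · simp
  · simp [Nat.choose_eq_zero_of_lt hl, hl.ne']

theorem coeff_trapezoidPoly_self (j : ℕ) : (trapezoidPoly j).coeff j = 2 * (j + 1) := by
  simp [coeff_trapezoidPoly]

theorem natDegree_trapezoidPrimitive_le (j : ℕ) :
    (trapezoidPrimitive j).natDegree ≤ j + 1 := by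
  unfold trapezoidPrimitive
  compute_degree

theorem coeff_trapezoidPrimitive (j : ℕ) : (trapezoidPrimitive j).coeff (j + 1) = 4 := by
  rw [trapezoidPrimitive, coeff_add, coeff_add, coeff_ofNat_mul, coeff_X_add_C_pow,
    coeff_X_add_C_pow, coeff_X_pow]
  norm_num

theorem det_mul_trapezoidPoly_eval {k : ℕ} (w v : Fin k → ℤ) :
    (of fun i j : Fin k => w i * (trapezoidPoly j).eval (v i)).det =
      (∏ i, w i) * (2 ^ k * k ! * (vandermonde v).det) := by
  calc _ = (∏ i, w i) * (of fun i j : Fin k => (trapezoidPoly j).eval (v i)).det :=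
        det_mul_column _ _
    _ = _ := by
      rw [det_eval_polynomials_eq_prod_coeff_mul_det_vandermonde _
        fun j => natDegree_trapezoidPoly_le j]
      congr 2
      simp only [coeff_trapezoidPoly_self, prod_mul_distrib, prod_const, card_univ,
        Fintype.card_fin, Fin.prod_univ_eq_prod_range (fun j => (j : ℤ) + 1)]
      congr 1
      exact_mod_cast prod_range_add_one_eq_factorial k

theorem det_trapezoidPrimitive_eval_sub {k : ℕ} (v : Fin (k + 1) → ℤ) :
    (of fun i j : Fin k => (trapezoidPrimitive j).eval (v i.succ) -
      (trapezoidPrimitive j).eval (v i.castSucc)).det = 4 ^ k * (vandermonde v).det := by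
  let P : Fin (k + 1) → ℤ[X] := Fin.cons 1 fun j => trapezoidPrimitive j
  have hP : ∀ j, (P j).natDegree ≤ j := Fin.cases (by simp [P])
    fun j => by simpa [P] using natDegree_trapezoidPrimitive_le j
  calc _ = (of fun i j => (P j).eval (v i)).det :=
        (det_eq_det_succ_sub_castSucc _ fun i => by simp [P]).symm
    _ = _ := by
      rw [det_eval_polynomials_eq_prod_coeff_mul_det_vandermonde P hP, Fin.prod_univ_succ]
      simp [P, coeff_trapezoidPrimitive]

end TrapezoidPolynomials

section Interlacing

variable {α : Type*} [LinearOrder α]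

/-- Stated by counting the elements below each `m`, the form in which partial row sums of an ASM
deliver it; for the sorted elements it says `tᵢ ≤ sᵢ ≤ tᵢ₊₁` (`interlaces_image_iff`). -/
def Interlaces (S T : Finset α) : Prop :=
  ∀ m, #{x ∈ S | x ≤ m} ≤ #{x ∈ T | x ≤ m} ∧ #{x ∈ T | x ≤ m} ≤ #{x ∈ S | x ≤ m} + 1

instance [Fintype α] : DecidableRel (Interlaces (α := α)) :=
  fun _ _ => by unfold Interlaces; infer_instance

theorem lt_card_filter_le_iff {k : ℕ} {s : Fin k → α} (hs : Monotone s) (i : Fin k) (m : α) :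
    (i : ℕ) < #{j | s j ≤ m} ↔ s i ≤ m := by
  constructor
  · intro hi
    by_contra! hm
    have hsub : ({j | s j ≤ m} : Finset (Fin k)) ⊆ Iio i := fun j hj =>
      mem_Iio.2 (hs.reflect_lt ((mem_filter.1 hj).2.trans_lt hm))
    have := card_le_card hsub
    simp only [Fin.card_Iio] at this
    omega
  · intro hi
    have hsub : Iic i ⊆ ({j | s j ≤ m} : Finset (Fin k)) := fun j hj =>
      mem_filter.2 ⟨mem_univ j, (hs (mem_Iic.1 hj)).trans hi⟩
    have := card_le_card hsub
    simp only [Fin.card_Iic] at this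
    omega

theorem card_filter_image_le {k : ℕ} {s : Fin k → α} (hs : Function.Injective s) (m : α) :
    #{x ∈ univ.image s | x ≤ m} = #{j | s j ≤ m} := by
  rw [filter_image, card_image_of_injective _ hs]

theorem interlaces_image_iff {k : ℕ} {s : Fin k → α} {t : Fin (k + 1) → α} (hs : StrictMono s)
    (ht : StrictMono t) :
    Interlaces (univ.image s) (univ.image t) ↔ ∀ i, t i.castSucc ≤ s i ∧ s i ≤ t i.succ := by
  have hs' := lt_card_filter_le_iff hs.monotone
  have ht' := lt_card_filter_le_iff ht.monotone
  simp only [Interlaces, card_filter_image_le hs.injective, card_filter_image_le ht.injective]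
  constructor
  · intro h i
    have h1 := (h (s i)).1
    have h2 := (h (t i.succ)).2
    have h3 := (hs' i (s i)).2 le_rfl
    have h4 := (ht' i.succ (t i.succ)).2 le_rfl
    rw [← hs', ← ht']
    simp only [Fin.val_castSucc, Fin.val_succ] at *
    omega
  · intro h m
    have hsk : #{j | s j ≤ m} ≤ k := (card_filter_le _ _).trans (by simp)
    have htk : #{j | t j ≤ m} ≤ k + 1 := (card_filter_le _ _).trans (by simp)
    constructor
    · by_contra! hlt
      have ht_le := (h ⟨_, hlt.trans_le hsk⟩).1.trans ((hs' ⟨_, hlt.trans_le hsk⟩ m).1 hlt)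
      rw [← ht'] at ht_le
      simp at ht_le
    · by_contra! hlt
      have hi : #{j | s j ≤ m} < k := by omega
      have hs_le := (h ⟨_, hi⟩).2.trans
        ((ht' (Fin.succ ⟨_, hi⟩) m).1 (by simp only [Fin.succ_mk]; omega))
      rw [← hs'] at hs_le
      simp at hs_le

theorem monotone_of_forall_le_le {k : ℕ} {t : Fin (k + 1) → α} (ht : Monotone t)
    {s : Fin k → α} (hs : ∀ i, t i.castSucc ≤ s i ∧ s i ≤ t i.succ) : Monotone s := by
  intro i j hij
  rcases hij.lt_or_eq with hij | rfl
  · exact (hs i).2.trans ((ht (Fin.succ_le_castSucc_iff.2 hij)).trans (hs j).1)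
  · exact le_rfl

theorem sum_interlaces_eq_sum_strictMono [Fintype α] [LocallyFiniteOrder α] {M : Type*}
    [AddCommMonoid M] {k : ℕ} (T : Finset α) (hT : #T = k + 1) (f : Finset α → M) :
    ∑ S with #S = k ∧ Interlaces S T, f S =
      ∑ s ∈ Fintype.piFinset (fun i : Fin k => Icc (T.orderEmbOfFin hT i.castSucc)
        (T.orderEmbOfFin hT i.succ)) with StrictMono s, f (univ.image s) := by
  have mem_iff : ∀ s : Fin k → α, StrictMono s →
      (Interlaces (univ.image s) T ↔ s ∈ Fintype.piFinset (fun i : Fin k =>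
        Icc (T.orderEmbOfFin hT i.castSucc) (T.orderEmbOfFin hT i.succ))) := fun s hs => by
    have := interlaces_image_iff hs (T.orderEmbOfFin hT).strictMono
    rw [image_orderEmbOfFin_univ] at this
    simp [this, Fintype.mem_piFinset]
  refine sum_bij' (fun S hS => ⇑(S.orderEmbOfFin (mem_filter.1 hS).2.1))
    (fun s _ => univ.image s) ?_ ?_ ?_ ?_ ?_
  · intro S hS
    obtain ⟨hS, hST⟩ := (mem_filter.1 hS).2
    rw [mem_filter, ← mem_iff _ (S.orderEmbOfFin hS).strictMono, image_orderEmbOfFin_univ]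
    exact ⟨hST, (S.orderEmbOfFin hS).strictMono⟩
  · intro s hs
    obtain ⟨hbox, hs⟩ := mem_filter.1 hs
    simp only [mem_filter, mem_univ, true_and]
    exact ⟨card_image_of_injective _ hs.injective |>.trans (by simp), (mem_iff s hs).2 hbox⟩
  · exact fun S _ => image_orderEmbOfFin_univ S _
  · exact fun s hs => (orderEmbOfFin_unique _ (fun i => mem_image_of_mem s (mem_univ i))
      (mem_filter.1 hs).2).symm
  · exact fun S _ => by rw [image_orderEmbOfFin_univ]

end Interlacing

theorem pow_card_sdiff_eq_mul_prod {α M : Type*} [DecidableEq α] [CommMonoid M]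
    {S T : Finset α} (h : #T = #S + 1) (a : M) :
    a ^ #(T \ S) = a * ∏ x ∈ S, if x ∈ T then 1 else a := by
  have hTS := card_sdiff_add_card_inter T S
  have hST := card_sdiff_add_card_inter S T
  rw [inter_comm] at hTS
  rw [prod_ite, prod_const_one, one_mul, prod_const, ← sdiff_eq_filter, ← pow_succ']
  congr 1
  omega

section OneStepIdentity

variable {n : ℕ}

def setVandermonde (S : Finset (Fin n)) : ℤ :=
  ∏ x ∈ S, ∏ y ∈ S with x < y, (((y : ℕ) : ℤ) - (x : ℕ))

theorem setVandermonde_image {k : ℕ} {s : Fin k → Fin n} (hs : StrictMono s) :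
    setVandermonde (univ.image s) = (vandermonde fun i => ((s i : ℕ) : ℤ)).det := by
  rw [det_vandermonde, setVandermonde, prod_image hs.injective.injOn]
  refine prod_congr rfl fun i _ => ?_
  rw [filter_image, prod_image hs.injective.injOn]
  congr 1
  ext j
  simp [hs.lt_iff_lt]

theorem setVandermonde_univ :
    setVandermonde (univ : Finset (Fin n)) = ∏ j ∈ range n, (j ! : ℤ) := by
  have h := setVandermonde_image (strictMono_id (α := Fin n))
  rw [image_id] at h
  rw [h]
  simp only [id]
  cases n with
  | zero => simp
  | succ m =>
    rw [det_vandermonde_id_eq_superFactorial, ← Nat.prod_range_succ_factorial]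
    push_cast
    rfl

theorem sum_Icc_trapezoid {R : Type*} [Ring R] (T : Finset (Fin n)) {a b : Fin n} (hab : a < b)
    (ha : a ∈ T) (hb : b ∈ T) (hgap : ∀ x ∈ T, a < x → b ≤ x) (f F : ℕ → R)
    (hF : ∀ x, f x + f (x + 1) = F (x + 1) - F x) :
    ∑ x ∈ Icc a b, (if x ∈ T then 1 else 2 : R) * f x = F b - F a := by
  have hweight : ∀ x ∈ Icc a b, (if x ∈ T then 1 else 2 : R) * f x =
      (if x ∈ Ico a b then f x else 0) + (if x ∈ Ioc a b then f x else 0) := by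
    intro x hx
    rw [mem_Icc] at hx
    rcases eq_or_ne x a with rfl | hxa
    · simp [ha, hab]
    rcases eq_or_ne x b with rfl | hxb
    · simp [hb, hab]
    have hx' : a < x ∧ x < b := ⟨lt_of_le_of_ne hx.1 hxa.symm, lt_of_le_of_ne hx.2 hxb⟩
    have hxT : x ∉ T := fun hxT => (hgap x hxT hx'.1).not_gt hx'.2
    simp only [hxT, if_false, mem_Ico, mem_Ioc, hx', hx'.1.le, hx'.2.le, and_self, if_true]
    rw [two_mul]
  rw [sum_congr rfl hweight, sum_add_distrib, sum_ite_mem, sum_ite_mem,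
    inter_eq_right.2 Ico_subset_Icc_self, inter_eq_right.2 Ioc_subset_Icc_self,
    ← sum_Ico_add_sum_Ioc_eq_sub f F hF hab.le, ← Fin.map_valEmbedding_Ico,
    ← Fin.map_valEmbedding_Ioc, sum_map, sum_map]
  rfl

theorem sum_Icc_orderEmbOfFin_trapezoidPoly {k : ℕ} (T : Finset (Fin n)) (hT : #T = k + 1)
    (i : Fin k) (j : ℕ) :
    ∑ x ∈ Icc (T.orderEmbOfFin hT i.castSucc) (T.orderEmbOfFin hT i.succ),
        (if x ∈ T then 1 else 2) * (trapezoidPoly j).eval ((x : ℕ) : ℤ) =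
      (trapezoidPrimitive j).eval ((T.orderEmbOfFin hT i.succ : ℕ) : ℤ) -
        (trapezoidPrimitive j).eval ((T.orderEmbOfFin hT i.castSucc : ℕ) : ℤ) := by
  set t := T.orderEmbOfFin hT
  refine sum_Icc_trapezoid T (t.strictMono Fin.castSucc_lt_succ) (orderEmbOfFin_mem _ _ _)
    (orderEmbOfFin_mem _ _ _) ?_ (fun y : ℕ => (trapezoidPoly j).eval (y : ℤ))
    (fun y : ℕ => (trapezoidPrimitive j).eval (y : ℤ)) fun x => by
      push_cast
      exact eval_trapezoidPoly_add_eval_succ j x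
  intro x hx hlt
  obtain ⟨l, rfl⟩ : x ∈ Set.range t := by rwa [range_orderEmbOfFin]
  exact t.monotone (Fin.castSucc_lt_iff_succ_le.1 (t.lt_iff_lt.1 hlt))

theorem pow_mul_factorial_mul_setVandermonde_image {k : ℕ} {T : Finset (Fin n)}
    (hT : #T = k + 1) {s : Fin k → Fin n} (hs : StrictMono s) :
    2 ^ k * k ! * (2 ^ #(T \ univ.image s) * setVandermonde (univ.image s)) =
      2 * (of fun i j : Fin k =>
        (if s i ∈ T then 1 else 2) * (trapezoidPoly j).eval ((s i : ℕ) : ℤ)).det := by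
  have hcard : #(univ.image s) = k := by rw [card_image_of_injective _ hs.injective]; simp
  rw [pow_card_sdiff_eq_mul_prod (by rw [hT, hcard]) (2 : ℤ), prod_image hs.injective.injOn,
    setVandermonde_image hs, det_mul_trapezoidPoly_eval]
  ring

theorem factorial_mul_sum_interlaces {k : ℕ} (T : Finset (Fin n)) (hT : #T = k + 1) :
    k ! * ∑ S with #S = k ∧ Interlaces S T, 2 ^ #(T \ S) * setVandermonde S =
      2 ^ (k + 1) * setVandermonde T := by
  set t := T.orderEmbOfFin hT
  let box : Fin k → Finset (Fin n) := fun i => Icc (t i.castSucc) (t i.succ)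
  let row : Fin n → Fin k → ℤ := fun x j =>
    (if x ∈ T then 1 else 2) * (trapezoidPoly j).eval ((x : ℕ) : ℤ)
  have hbox : ∀ s ∈ Fintype.piFinset box, Monotone s := fun s hs =>
    monotone_of_forall_le_le t.monotone fun i => mem_Icc.1 (Fintype.mem_piFinset.1 hs i)
  have hrow : ∀ i, ∑ x ∈ box i, row x = fun j : Fin k =>
      (trapezoidPrimitive j).eval ((t i.succ : ℕ) : ℤ) -
        (trapezoidPrimitive j).eval ((t i.castSucc : ℕ) : ℤ) := fun i => by
    funext j
    rw [Finset.sum_apply]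
    exact sum_Icc_orderEmbOfFin_trapezoidPoly T hT i j
  have hmain : 2 ^ k * (k ! * ∑ S with #S = k ∧ Interlaces S T,
      2 ^ #(T \ S) * setVandermonde S) = 2 ^ k * (2 ^ (k + 1) * setVandermonde T) := by
    calc _ = ∑ S with #S = k ∧ Interlaces S T,
          2 ^ k * k ! * (2 ^ #(T \ S) * setVandermonde S) := by
          rw [← mul_assoc, mul_sum]
      _ = 2 * ∑ s ∈ Fintype.piFinset box with StrictMono s, (of fun i => row (s i)).det := by
          rw [sum_interlaces_eq_sum_strictMono T hT, mul_sum]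
          exact sum_congr rfl fun s hs =>
            pow_mul_factorial_mul_setVandermonde_image hT (mem_filter.1 hs).2
      _ = 2 * (of fun i => ∑ x ∈ box i, row x).det := by
          rw [sum_piFinset_filter_strictMono_det row box hbox,
            sum_piFinset_det_eq_det_sum (fun _ => row) box]
      _ = 2 * (4 ^ k * setVandermonde T) := by
          simp_rw [hrow]
          rw [det_trapezoidPrimitive_eval_sub (fun i => ((t i : ℕ) : ℤ)),
            ← setVandermonde_image t.strictMono, image_orderEmbOfFin_univ]
      _ = _ := by
          rw [pow_succ, show (4 : ℤ) ^ k = 2 ^ k * 2 ^ k by rw [← mul_pow]; norm_num]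
          ring
  exact mul_left_cancel₀ (pow_ne_zero _ two_ne_zero) hmain

end OneStepIdentity

section MonotoneTriangles

variable {n : ℕ}

def monotoneTriangles (k : ℕ) (T : Finset (Fin n)) : Finset (Fin (k + 1) → Finset (Fin n)) :=
  {c | (∀ j, #(c j) = j) ∧ (∀ i : Fin k, Interlaces (c i.castSucc) (c i.succ)) ∧
    c (Fin.last k) = T}

def plusCount {k : ℕ} (c : Fin (k + 1) → Finset (Fin n)) : ℕ :=
  ∑ i : Fin k, #(c i.succ \ c i.castSucc)

theorem card_of_mem_monotoneTriangles {k : ℕ} {T : Finset (Fin n)}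
    {c : Fin (k + 1) → Finset (Fin n)} (hc : c ∈ monotoneTriangles k T) : #T = k := by
  obtain ⟨hcard, -, rfl⟩ := (mem_filter.1 hc).2
  simpa using hcard (Fin.last k)

theorem apply_zero_of_mem_monotoneTriangles {k : ℕ} {T : Finset (Fin n)}
    {c : Fin (k + 1) → Finset (Fin n)} (hc : c ∈ monotoneTriangles k T) : c 0 = ∅ :=
  card_eq_zero.1 ((mem_filter.1 hc).2.1 0)

theorem monotoneTriangles_zero {T : Finset (Fin n)} (hT : #T = 0) :
    monotoneTriangles 0 T = {fun _ => T} := by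
  ext c
  simp only [monotoneTriangles, mem_filter, mem_univ, true_and, mem_singleton]
  constructor
  · rintro ⟨-, -, hc⟩
    funext j
    rw [Subsingleton.elim (α := Fin 1) j (Fin.last 0), hc]
  · rintro rfl
    exact ⟨fun j => by simp [hT], fun i => i.elim0, rfl⟩

theorem mem_monotoneTriangles_succ {k : ℕ} {T : Finset (Fin n)}
    {c : Fin (k + 2) → Finset (Fin n)} :
    c ∈ monotoneTriangles (k + 1) T ↔
      Fin.init c ∈ monotoneTriangles k (c (Fin.last k).castSucc) ∧
        #T = k + 1 ∧ Interlaces (c (Fin.last k).castSucc) T ∧ c (Fin.last (k + 1)) = T := by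
  simp only [monotoneTriangles, mem_filter, mem_univ, true_and, Fin.forall_fin_succ' (n := k + 1),
    Fin.forall_fin_succ' (n := k), Fin.init, Fin.succ_castSucc, Fin.succ_last, Fin.val_last,
    Fin.val_castSucc]
  constructor
  · rintro ⟨⟨h1, h2⟩, ⟨h3, h4⟩, rfl⟩
    exact ⟨⟨h1, h3, trivial⟩, h2, h4, rfl⟩
  · rintro ⟨⟨h1, h3, -⟩, h2, h4, rfl⟩
    exact ⟨⟨h1, h2⟩, ⟨h3, h4⟩, rfl⟩

theorem plusCount_eq_plusCount_init_add {k : ℕ} (c : Fin (k + 2) → Finset (Fin n)) :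
    plusCount c = plusCount (Fin.init c) + #(c (Fin.last (k + 1)) \ c (Fin.last k).castSucc) := by
  rw [plusCount, Fin.sum_univ_castSucc, Fin.succ_last]
  rfl

theorem sum_monotoneTriangles_succ {R : Type*} [CommSemiring R] {k : ℕ} {T : Finset (Fin n)}
    (hT : #T = k + 1) (a : R) :
    ∑ c ∈ monotoneTriangles (k + 1) T, a ^ plusCount c =
      ∑ S with #S = k ∧ Interlaces S T,
        a ^ #(T \ S) * ∑ c ∈ monotoneTriangles k S, a ^ plusCount c := by
  simp_rw [mul_sum]
  rw [sum_sigma']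
  refine sum_bij' (fun c _ => ⟨c (Fin.last k).castSucc, Fin.init c⟩) (fun p _ => Fin.snoc p.2 T)
    ?_ ?_ ?_ ?_ ?_
  · intro c hc
    obtain ⟨hinit, -, hint, -⟩ := mem_monotoneTriangles_succ.1 hc
    simp only [mem_sigma, mem_filter, mem_univ, true_and]
    exact ⟨⟨card_of_mem_monotoneTriangles hinit, hint⟩, hinit⟩
  · rintro ⟨S, c⟩ hp
    simp only [mem_sigma, mem_filter, mem_univ, true_and] at hp
    obtain ⟨⟨-, hST⟩, hc⟩ := hp
    have hlast : c (Fin.last k) = S := (mem_filter.1 hc).2.2.2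
    rw [mem_monotoneTriangles_succ]
    simp [Fin.init_snoc, hlast, hc, hT, hST]
  · intro c hc
    dsimp only
    rw [← (mem_monotoneTriangles_succ.1 hc).2.2.2, Fin.snoc_init_self]
  · rintro ⟨S, c⟩ hp
    have hlast : c (Fin.last k) = S := (mem_filter.1 (mem_sigma.1 hp).2).2.2.2
    simp [Fin.init_snoc, hlast]
  · intro c hc
    rw [plusCount_eq_plusCount_init_add, pow_add, mul_comm,
      (mem_monotoneTriangles_succ.1 hc).2.2.2]

theorem prod_factorial_mul_sum_monotoneTriangles (k : ℕ) {T : Finset (Fin n)} (hT : #T = k) :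
    (∏ j ∈ range k, (j ! : ℤ)) * ∑ c ∈ monotoneTriangles k T, (2 : ℤ) ^ plusCount c =
      2 ^ (k + 1).choose 2 * setVandermonde T := by
  induction k generalizing T with
  | zero =>
    rw [monotoneTriangles_zero hT, card_eq_zero.1 hT]
    simp [plusCount, setVandermonde]
  | succ k ih =>
    calc _ = (k ! : ℤ) * ∑ S with #S = k ∧ Interlaces S T, 2 ^ #(T \ S) *
          ((∏ j ∈ range k, (j ! : ℤ)) * ∑ c ∈ monotoneTriangles k S, (2 : ℤ) ^ plusCount c) := by
          rw [sum_monotoneTriangles_succ hT, prod_range_succ, mul_sum, mul_sum]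
          exact sum_congr rfl fun S _ => by ring
      _ = 2 ^ (k + 1).choose 2 *
          ((k ! : ℤ) * ∑ S with #S = k ∧ Interlaces S T, 2 ^ #(T \ S) * setVandermonde S) := by
          rw [mul_sum, mul_sum, mul_sum]
          refine sum_congr rfl fun S hS => ?_
          rw [ih (mem_filter.1 hS).2.1]
          ring
      _ = _ := by
          rw [factorial_mul_sum_interlaces T hT, Nat.choose_succ_succ' (k + 1) 1,
            Nat.choose_one_right, pow_add]
          ring

end MonotoneTriangles

section AlternatingSignMatrices

variable {n : ℕ}

def colPartialSum (A : Matrix (Fin n) (Fin n) ℤ) (j : Fin (n + 1)) (col : Fin n) : ℤ :=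
  ∑ x with x.castSucc < j, A x col

def toTriangle (A : Matrix (Fin n) (Fin n) ℤ) (j : Fin (n + 1)) : Finset (Fin n) :=
  {col | colPartialSum A j col = 1}

def ofTriangle (c : Fin (n + 1) → Finset (Fin n)) : Matrix (Fin n) (Fin n) ℤ :=
  of fun i col => (if col ∈ c i.succ then 1 else 0) - (if col ∈ c i.castSucc then 1 else 0)

theorem colPartialSum_zero (A : Matrix (Fin n) (Fin n) ℤ) (col : Fin n) :
    colPartialSum A 0 col = 0 := by
  simp [colPartialSum]

theorem colPartialSum_succ (A : Matrix (Fin n) (Fin n) ℤ) (i col : Fin n) :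
    colPartialSum A i.succ col = ∑ x ∈ Iic i, A x col := by
  rw [colPartialSum]
  congr 1
  ext x
  simp [Fin.castSucc_lt_succ_iff]

theorem colPartialSum_succ_eq_add (A : Matrix (Fin n) (Fin n) ℤ) (i col : Fin n) :
    colPartialSum A i.succ col = colPartialSum A i.castSucc col + A i col := by
  rw [colPartialSum_succ, ← Iio_insert, sum_insert (by simp), add_comm, colPartialSum]
  congr 2
  ext x
  simp

theorem colPartialSum_last (A : Matrix (Fin n) (Fin n) ℤ) (col : Fin n) :
    colPartialSum A (Fin.last n) col = ∑ x, A x col := by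
  simp [colPartialSum, Fin.castSucc_lt_last]

theorem sum_ofTriangle_row (c : Fin (n + 1) → Finset (Fin n)) (i : Fin n) (D : Finset (Fin n)) :
    ∑ col ∈ D, ofTriangle c i col =
      (#{x ∈ c i.succ | x ∈ D} : ℤ) - #{x ∈ c i.castSucc | x ∈ D} := by
  simp only [ofTriangle, of_apply, sum_sub_distrib, sum_boole]
  congr 3 <;> ext <;> simp [and_comm]

theorem colPartialSum_ofTriangle {c : Fin (n + 1) → Finset (Fin n)} (hc : c 0 = ∅)
    (j : Fin (n + 1)) (col : Fin n) :
    colPartialSum (ofTriangle c) j col = if col ∈ c j then 1 else 0 := by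
  induction j using Fin.induction with
  | zero => simp [colPartialSum_zero, hc]
  | succ i ih => rw [colPartialSum_succ_eq_add, ih, ofTriangle, of_apply]; ring

theorem toTriangle_ofTriangle {c : Fin (n + 1) → Finset (Fin n)} (hc : c 0 = ∅) :
    toTriangle (ofTriangle c) = c := by
  funext j
  ext col
  simp [toTriangle, colPartialSum_ofTriangle hc]

theorem isASM_ofTriangle {c : Fin (n + 1) → Finset (Fin n)}
    (hc : c ∈ monotoneTriangles n univ) : IsASM (ofTriangle c) := by
  obtain ⟨hcard, hint, hlast⟩ := (mem_filter.1 hc).2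
  have hc0 := apply_zero_of_mem_monotoneTriangles hc
  refine ⟨fun i col => ?_, fun i m => ?_, fun col m => ?_, fun i => ?_, fun col => ?_⟩
  · simp only [ofTriangle, of_apply]
    split_ifs <;> simp
  · have := hint i m
    rw [sum_ofTriangle_row]
    simp only [mem_Iic]
    omega
  · rw [← colPartialSum_succ, colPartialSum_ofTriangle hc0]
    split_ifs <;> simp
  · rw [sum_ofTriangle_row]
    simp [hcard]
  · rw [← colPartialSum_last, colPartialSum_ofTriangle hc0, hlast]
    simp

theorem IsASM.colPartialSum_eq {A : Matrix (Fin n) (Fin n) ℤ} (hA : IsASM A) (j : Fin (n + 1))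
    (col : Fin n) : colPartialSum A j col = if col ∈ toTriangle A j then 1 else 0 := by
  have h01 : colPartialSum A j col = 0 ∨ colPartialSum A j col = 1 := by
    induction j using Fin.cases with
    | zero => exact .inl (colPartialSum_zero A col)
    | succ i => rw [colPartialSum_succ]; exact hA.2.2.1 col i
  simp only [toTriangle, mem_filter, mem_univ, true_and]
  split_ifs <;> omega

theorem IsASM.ofTriangle_toTriangle {A : Matrix (Fin n) (Fin n) ℤ} (hA : IsASM A) :
    ofTriangle (toTriangle A) = A := by
  ext i col
  rw [ofTriangle, of_apply, ← hA.colPartialSum_eq, ← hA.colPartialSum_eq,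
    colPartialSum_succ_eq_add]
  ring

theorem IsASM.toTriangle_mem {A : Matrix (Fin n) (Fin n) ℤ} (hA : IsASM A) :
    toTriangle A ∈ monotoneTriangles n univ := by
  have hrow := sum_ofTriangle_row (toTriangle A)
  rw [hA.ofTriangle_toTriangle] at hrow
  refine mem_filter.2 ⟨mem_univ _, fun j => ?_, fun i m => ?_, ?_⟩
  · induction j using Fin.induction with
    | zero => simp [toTriangle, colPartialSum_zero]
    | succ i ih =>
      have := hrow i univ
      simp only [hA.2.2.2.1 i, mem_univ, filter_true] at this
      rw [Fin.val_castSucc] at ih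
      rw [Fin.val_succ]
      omega
  · have h := hrow i (Iic m)
    simp only [mem_Iic] at h
    have := hA.2.1 i m
    constructor <;> omega
  · ext col
    simp [toTriangle, colPartialSum_last, hA.2.2.2.2 col]

theorem Nplus_ofTriangle (c : Fin (n + 1) → Finset (Fin n)) :
    Nplus (ofTriangle c) = plusCount c := by
  rw [Nplus, plusCount, card_filter, Fintype.sum_prod_type]
  refine sum_congr rfl fun i _ => ?_
  rw [← card_filter]
  congr 1
  ext col
  rw [mem_filter, mem_sdiff, ofTriangle, of_apply]
  simp only [mem_univ, true_and]
  split_ifs <;> simp_all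

theorem setOf_isASM_eq_image :
    {A : Matrix (Fin n) (Fin n) ℤ | IsASM A} = (monotoneTriangles n univ).image ofTriangle := by
  rw [coe_image]
  exact Set.ext fun A => ⟨fun hA => ⟨_, hA.toTriangle_mem, hA.ofTriangle_toTriangle⟩,
    fun ⟨c, hc, hcA⟩ => hcA ▸ isASM_ofTriangle hc⟩

theorem finsum_two_pow_Nplus_eq_sum_monotoneTriangles :
    ∑ᶠ A ∈ {A : Matrix (Fin n) (Fin n) ℤ | IsASM A}, 2 ^ Nplus A =
      ∑ c ∈ monotoneTriangles n (univ : Finset (Fin n)), 2 ^ plusCount c := by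
  rw [setOf_isASM_eq_image, finsum_mem_coe_finset, sum_image fun c hc c' hc' h => by
    rw [← toTriangle_ofTriangle (apply_zero_of_mem_monotoneTriangles hc), h,
      toTriangle_ofTriangle (apply_zero_of_mem_monotoneTriangles hc')]]
  simp only [Nplus_ofTriangle]

end AlternatingSignMatrices

theorem two_enum_plus_eq_pow_general (n : ℕ) :
    (∑ᶠ A ∈ {A : Matrix (Fin n) (Fin n) ℤ | IsASM A}, 2 ^ Nplus A) =
      2 ^ (n * (n + 1) / 2) := by
  have h := prod_factorial_mul_sum_monotoneTriangles n (T := (univ : Finset (Fin n))) (by simp)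
  rw [setVandermonde_univ, mul_comm _ (∏ j ∈ range n, (j ! : ℤ))] at h
  have hsum := mul_left_cancel₀ (prod_ne_zero_iff.2 fun j _ => by positivity) h
  rw [finsum_two_pow_Nplus_eq_sum_monotoneTriangles, show n * (n + 1) / 2 = (n + 1).choose 2 by
    rw [Nat.choose_two_right, Nat.add_sub_cancel, mul_comm]]
  exact_mod_cast hsum

/-- For every `n ≥ 1`, `Σ_{A ∈ 𝒜ₙ} 2^{N₊(A)} = 2^{n(n+1)/2}`. -/
theorem two_enum_plus_eq_pow (n : ℕ) (hn : 1 ≤ n) :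
    (∑ᶠ A ∈ {A : Matrix (Fin n) (Fin n) ℤ | IsASM A}, 2 ^ Nplus A) =
      2 ^ (n * (n + 1) / 2) :=
  two_enum_plus_eq_pow_general n
end

section
/- Let n ≥ 1 and let D be any subset of the distinguished vertices {a₀,…,a_n, b₀,…,b_n} of the graph G_n. For 0 ≤ j ≤ n define t_j = 1 if neither a_j nor b_j lies in D, t_j = −1 if both a_j and b_j lie in D, and t_j = 0 if exactly one of them lies in D. Then the number of perfect matchings of the induced subgraph of G_n obtained by deleting the vertices of D equals 2^{#{j : t_j = 1}} if the sequence (t₀,…,t_n) satisfies that every partial sum t₀ + ⋯ + t_m (0 ≤ m ≤ n) equals 0 or 1 and the total sum t₀ + ⋯ + t_n equals 1 (equivalently, the nonzero t_j alternate in sign beginning and ending with +1), and it equals 0 otherwise. -/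
/-- Vertices of the graph `Gₙ`: distinguished vertices `a 0, …, a n`, `b 0, …, b n`,
inner vertices `c 1, …, c n` (here `c i` for `i : Fin n` stands for `c (i+1)`),
and the two cap vertices `w` and `w'`. -/
inductive GnV (n : ℕ) where
  | a (i : Fin (n + 1))
  | b (i : Fin (n + 1))
  | c (i : Fin n)
  | w
  | w'

/-- The edge relation of `Gₙ`: `w–a₀`, `w–b₀`, `w'–aₙ`, `w'–bₙ`, and for each
`1 ≤ i ≤ n` the four edges `cᵢ–a_{i−1}`, `cᵢ–b_{i−1}`, `cᵢ–aᵢ`, `cᵢ–bᵢ`. -/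
def GnRel (n : ℕ) : GnV n → GnV n → Prop := fun u v =>
  (u = GnV.w ∧ (v = GnV.a 0 ∨ v = GnV.b 0)) ∨
  (u = GnV.w' ∧ (v = GnV.a (Fin.last n) ∨ v = GnV.b (Fin.last n))) ∨
  (∃ i : Fin n, u = GnV.c i ∧
    (v = GnV.a i.castSucc ∨ v = GnV.b i.castSucc ∨ v = GnV.a i.succ ∨ v = GnV.b i.succ))

/-- The graph `Gₙ` (one row of the Aztec diamond dual graph with its end caps). -/
def GnGraph (n : ℕ) : SimpleGraph (GnV n) := SimpleGraph.fromRel (GnRel n)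

/-!
Every edge of `Gₙ` joins a distinguished vertex to one of the `n + 2` slots `w, c₁, …, cₙ, w'`,
and the two distinguished vertices of column `j` are adjacent exactly to slots `j` and `j + 1`.
A perfect matching of `Gₙ − D` is therefore a choice of direction (left or right) for every
surviving distinguished vertex such that each slot is hit exactly once. If `r_j` vertices of
column `j` go right and `ℓ_j` go left, then `ℓ₀ = 1`, `r_j + ℓ_{j+1} = 1` and `r_n = 1`, while
`ℓ_j + r_j = t_j + 1`; this forces `r_j = t₀ + ⋯ + t_j`, so the partial sums are `0` or `1`
and the total is `1`. Conversely the columns can then be chosen independently, column `j`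
in `binom(t_j + 1, r_j)` ways, which is `2` exactly when `t_j = 1`.
-/

open Function

section
open Set

namespace SimpleGraph

variable {V ι : Type*} {G : SimpleGraph V} {e : ι → V}

lemma injOn_range_edges (he : Injective e) (hG : G.IsBipartiteWith (range e) (range e)ᶜ) :
    InjOn (fun f : ι → V => range fun i => s(e i, f i)) {f | ∀ i, G.Adj (e i) (f i)} := by
  intro f hf g hg hfg
  funext i
  have hfg' : (range fun i => s(e i, f i)) = range fun i => s(e i, g i) := hfg
  obtain ⟨i', hi'⟩ : s(e i, f i) ∈ range fun i => s(e i, g i) := hfg' ▸ mem_range_self i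
  rcases Sym2.eq_iff.1 hi' with ⟨hii', hgf⟩ | ⟨hgi, -⟩
  · obtain rfl := he hii'
    exact hgf.symm
  · exact absurd (mem_range_self i') (hG.mem_of_mem_adj (mem_range_self i) (hgi ▸ hf i))

lemma isPerfect_range_edges (he : Injective e) (hG : G.IsBipartiteWith (range e) (range e)ᶜ)
    {f : ι → V} (hadj : ∀ i, G.Adj (e i) (f i)) (hbij : ∀ v ∉ range e, ∃! i, f i = v) :
    (range fun i => s(e i, f i)) ⊆ G.edgeSet ∧
      ∀ v, ∃! x, x ∈ (range fun i => s(e i, f i)) ∧ v ∈ x := by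
  have hf (i : ι) : f i ∉ range e := hG.mem_of_mem_adj (mem_range_self i) (hadj i)
  refine ⟨range_subset_iff.2 hadj, fun v => ?_⟩
  by_cases hv : v ∈ range e
  · obtain ⟨i, rfl⟩ := hv
    refine ⟨s(e i, f i), ⟨mem_range_self i, Sym2.mem_mk_left _ _⟩, ?_⟩
    rintro _ ⟨⟨i', rfl⟩, hmem⟩
    rcases Sym2.mem_iff.1 hmem with h | h
    · rw [he h]
    · exact absurd (h ▸ mem_range_self i) (hf i')
  · obtain ⟨i, rfl, huniq⟩ := hbij v hv
    refine ⟨s(e i, f i), ⟨mem_range_self i, Sym2.mem_mk_right _ _⟩, ?_⟩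
    rintro _ ⟨⟨i', rfl⟩, hmem⟩
    rcases Sym2.mem_iff.1 hmem with h | h
    · exact absurd (h ▸ mem_range_self i') hv
    · rw [huniq i' h.symm]

lemma exists_eq_range_edges (he : Injective e) (hG : G.IsBipartiteWith (range e) (range e)ᶜ)
    {M : Set (Sym2 V)} (hM : M ⊆ G.edgeSet) (huniq : ∀ v, ∃! x, x ∈ M ∧ v ∈ x) :
    ∃ f : ι → V, ((∀ i, G.Adj (e i) (f i)) ∧ ∀ v ∉ range e, ∃! i, f i = v) ∧
      (range fun i => s(e i, f i)) = M := by
  choose x hxM hex using fun i => (huniq (e i)).exists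
  have hx (i : ι) : s(e i, Sym2.Mem.other (hex i)) = x i := Sym2.other_spec (hex i)
  set f : ι → V := fun i => Sym2.Mem.other (hex i)
  have hadj (i : ι) : G.Adj (e i) (f i) := by rw [← mem_edgeSet, hx]; exact hM (hxM i)
  have hf (i : ι) : f i ∉ range e := hG.mem_of_mem_adj (mem_range_self i) (hadj i)
  have hcover {a b : V} (hab : s(a, b) ∈ M) : ∃ i, x i = s(a, b) := by
    rcases hG.mem_of_adj (hM hab) with ⟨⟨i, rfl⟩, -⟩ | ⟨-, ⟨i, rfl⟩⟩
    · exact ⟨i, (huniq (e i)).unique ⟨hxM i, hex i⟩ ⟨hab, Sym2.mem_mk_left _ _⟩⟩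
    · exact ⟨i, (huniq (e i)).unique ⟨hxM i, hex i⟩ ⟨hab, Sym2.mem_mk_right _ _⟩⟩
  refine ⟨f, ⟨hadj, fun v hv => ?_⟩, ?_⟩
  · obtain ⟨y, ⟨hyM, hvy⟩, -⟩ := huniq v
    rw [← Sym2.other_spec hvy] at hyM
    obtain ⟨i, hi⟩ := hcover hyM
    have hvi : v ∈ s(e i, f i) := hx i ▸ hi ▸ Sym2.mem_mk_left _ _
    refine ⟨i, (Sym2.mem_iff.1 hvi).resolve_left (fun h => hv ⟨i, h.symm⟩) |>.symm, ?_⟩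
    rintro i' rfl
    have hxx : x i' = x i := (huniq (f i')).unique
      ⟨hxM i', hx i' ▸ Sym2.mem_mk_right _ _⟩ ⟨hxM i, hx i ▸ hvi⟩
    have hi'i : e i' ∈ s(e i, f i) := by rw [hx i, ← hxx]; exact hex i'
    rcases Sym2.mem_iff.1 hi'i with h | h
    · exact he h
    · exact absurd ⟨i', h⟩ (hf i)
  · refine Subset.antisymm (range_subset_iff.2 fun i => hx i ▸ hxM i) fun y hy => ?_
    induction y using Sym2.ind with
    | _ a b => obtain ⟨i, hi⟩ := hcover hy; exact ⟨i, (hx i).trans hi⟩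

lemma IsBipartiteWith.induce_compl {s : Set V} (h : G.IsBipartiteWith s sᶜ) (S : Set V) :
    (G.induce S).IsBipartiteWith (Subtype.val ⁻¹' s) (Subtype.val ⁻¹' s)ᶜ :=
  ⟨disjoint_compl_right, fun _ _ huv => h.mem_of_adj huv⟩

end SimpleGraph

theorem numPM_eq_ncard_of_isBipartiteWith {V ι : Type*} {G : SimpleGraph V} {e : ι → V}
    (he : Injective e) (hG : G.IsBipartiteWith (range e) (range e)ᶜ) :
    numPM G =
      {f : ι → V | (∀ i, G.Adj (e i) (f i)) ∧ ∀ v ∉ range e, ∃! i, f i = v}.ncard := by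
  rw [numPM, ← ((G.injOn_range_edges he hG).mono fun _ hf => hf.1).ncard_image]
  congr 1
  ext M
  constructor
  · rintro ⟨hM, huniq⟩
    obtain ⟨f, hf, rfl⟩ := G.exists_eq_range_edges he hG hM huniq
    exact ⟨f, hf, rfl⟩
  · rintro ⟨f, ⟨hadj, hbij⟩, rfl⟩
    exact G.isPerfect_range_edges he hG hadj hbij

end

open Finset

namespace Fin

variable {n : ℕ}

def succIf (j : Fin (n + 1)) (d : Bool) : Fin (n + 2) := if d then j.succ else j.castSucc

lemma succIf_injective (j : Fin (n + 1)) : Injective j.succIf := by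
  rintro (_ | _) (_ | _) h <;> simp_all [succIf, Fin.ext_iff]

lemma eq_zero_or_eq_last_or_eq_succ_castSucc (k : Fin (n + 2)) :
    k = 0 ∨ k = last (n + 1) ∨ ∃ i : Fin n, k = i.castSucc.succ := by
  rcases eq_zero_or_eq_succ k with rfl | ⟨j, rfl⟩
  · exact Or.inl rfl
  · rcases eq_castSucc_or_eq_last j with ⟨i, rfl⟩ | rfl
    · exact Or.inr (Or.inr ⟨i, rfl⟩)
    · exact Or.inr (Or.inl (succ_last n))

lemma sum_Iic_zero {M : Type*} [AddCommMonoid M] (f : Fin (n + 1) → M) :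
    ∑ x ∈ Iic 0, f x = f 0 := by
  rw [← bot_eq_zero, Iic_bot, sum_singleton]

lemma sum_Iic_last {M : Type*} [AddCommMonoid M] (f : Fin (n + 1) → M) :
    ∑ x ∈ Iic (last n), f x = ∑ x, f x := by
  rw [← top_eq_last, Iic_top]

lemma sum_Iic_succ {M : Type*} [AddCommMonoid M] (f : Fin (n + 1) → M) (i : Fin n) :
    ∑ x ∈ Iic i.succ, f x = ∑ x ∈ Iic i.castSucc, f x + f i.succ := by
  have : Iio i.succ = Iic i.castSucc := by ext x; simp [lt_def, le_def]
  rw [← Iio_insert, sum_insert notMem_Iio_self, this, add_comm]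

end Fin

lemma card_fun_bool_card_filter_eq (α : Type*) [Fintype α] (k : ℕ) :
    Nat.card {g : α → Bool // #{a | g a = true} = k} = (Fintype.card α).choose k := by
  classical
  let e : {g : α → Bool // #{a | g a = true} = k} ≃ {s : Finset α // #s = k} :=
    { toFun := fun g => ⟨univ.filter fun a => g.1 a = true, g.2⟩
      invFun := fun s => ⟨fun a => decide (a ∈ s.1), by simpa using s.2⟩
      left_inv := fun g => by ext a; simp
      right_inv := fun s => by ext a; simp }
  rw [Nat.card_congr e, Nat.card_eq_fintype_card, Fintype.card_finset_len]

section ColumnAssignments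

variable {κ β : Type*} [Fintype κ] [DecidableEq β] (col : κ → β)

def rightCount (d : κ → Bool) (j : β) : ℕ := #{i | col i = j ∧ d i = true}

def leftCount (d : κ → Bool) (j : β) : ℕ := #{i | col i = j ∧ d i = false}

variable {col}

lemma leftCount_add_rightCount (d : κ → Bool) (j : β) :
    leftCount col d j + rightCount col d j = #{i | col i = j} := by
  rw [leftCount, rightCount, ← filter_filter, ← filter_filter, add_comm]
  simpa using card_filter_add_card_filter_not (s := {i | col i = j}) (fun i => d i = true)

lemma ncard_rightCount_eq_prod_choose [Fintype β] (c : β → ℕ) :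
    {d : κ → Bool | ∀ j, rightCount col d j = c j}.ncard =
      ∏ j, (#{i | col i = j}).choose (c j) := by
  classical
  let e : (κ → Bool) ≃ ((j : β) → {i // col i = j} → Bool) :=
    { toFun := fun d _ x => d x
      invFun := fun g i => g (col i) ⟨i, rfl⟩
      left_inv := fun _ => rfl
      right_inv := fun g => by ext j ⟨i, rfl⟩; rfl }
  have hcount (d : κ → Bool) (j : β) : rightCount col d j = #{x | e d j x = true} := by
    rw [rightCount, ← card_map (Function.Embedding.subtype _)]
    congr 1
    ext i
    simp [e, and_comm]
  rw [← Nat.card_coe_set_eq]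
  refine (Nat.card_congr ((e.subtypeEquiv (p := fun d => ∀ j, rightCount col d j = c j)
    (q := fun g => ∀ j, #{x | g j x = true} = c j) fun d =>
      forall_congr' fun j => by rw [hcount]).trans
    (Equiv.subtypePiEquivPi
      (p := fun j (g : {i // col i = j} → Bool) => #{x | g x = true} = c j)))).trans ?_
  rw [Nat.card_pi]
  refine prod_congr rfl fun j _ => ?_
  rw [card_fun_bool_card_filter_eq, Fintype.card_subtype]

end ColumnAssignments

section SlotAssignments

variable {κ : Type*} [Fintype κ] {n : ℕ} {col : κ → Fin (n + 1)} {t : Fin (n + 1) → ℤ}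
  {d : κ → Bool}

lemma card_succIf_eq (k : Fin (n + 2)) :
    #{i | (col i).succIf (d i) = k} =
      #{i | (col i).castSucc = k ∧ d i = false} + #{i | (col i).succ = k ∧ d i = true} := by
  classical
  rw [← card_union_of_disjoint (disjoint_filter.2 fun i _ h h' => by simp [h.2] at h'),
    ← filter_or]
  refine congrArg card (filter_congr fun i _ => ?_)
  cases d i <;> simp [Fin.succIf]

lemma card_succIf_eq_zero :
    #{i | (col i).succIf (d i) = 0} = leftCount col d 0 := by
  simp [card_succIf_eq, leftCount, Fin.succ_ne_zero]

lemma card_succIf_eq_last :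
    #{i | (col i).succIf (d i) = Fin.last (n + 1)} = rightCount col d (Fin.last n) := by
  simp [card_succIf_eq, rightCount, Fin.castSucc_ne_last]

lemma card_succIf_eq_succ_castSucc (i : Fin n) :
    #{x | (col x).succIf (d x) = i.castSucc.succ} =
      leftCount col d i.succ + rightCount col d i.castSucc := by
  have h (j : Fin (n + 1)) : j.castSucc = i.castSucc.succ ↔ j = i.succ := by
    rw [← Fin.castSucc_succ, Fin.castSucc_inj]
  simp [card_succIf_eq, leftCount, rightCount, h]

lemma card_succIf_eq_one (hd : Bijective fun i => (col i).succIf (d i))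
    (k : Fin (n + 2)) : #{i | (col i).succIf (d i) = k} = 1 :=
  (Fintype.existsUnique_iff_card_one _).1 ((bijective_iff_existsUnique _).1 hd k)

lemma rightCount_eq_sum_Iic (ht : ∀ j, t j = #{i | col i = j} - 1)
    (hd : Bijective fun i => (col i).succIf (d i)) (j : Fin (n + 1)) :
    (rightCount col d j : ℤ) = ∑ x ∈ Iic j, t x := by
  induction j using Fin.induction with
  | zero =>
    have h0 := card_succIf_eq_one hd 0
    have := leftCount_add_rightCount (col := col) d 0
    rw [card_succIf_eq_zero] at h0
    rw [Fin.sum_Iic_zero, ht]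
    omega
  | succ i ih =>
    have hi := card_succIf_eq_one hd i.castSucc.succ
    have := leftCount_add_rightCount (col := col) d i.succ
    rw [card_succIf_eq_succ_castSucc] at hi
    rw [Fin.sum_Iic_succ, ← ih, ht]
    omega

lemma partialSums_of_bijective (ht : ∀ j, t j = #{i | col i = j} - 1)
    (hd : Bijective fun i => (col i).succIf (d i)) :
    (∀ m, ∑ x ∈ Iic m, t x = 0 ∨ ∑ x ∈ Iic m, t x = 1) ∧ ∑ x, t x = 1 := by
  refine ⟨fun m => ?_, ?_⟩
  · have : rightCount col d m ≤ #{i | (col i).succIf (d i) = m.succ} :=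
      card_le_card fun i hi => by
        simp only [mem_filter, mem_univ, true_and] at hi ⊢
        simp [Fin.succIf, hi.1, hi.2]
    rw [card_succIf_eq_one hd] at this
    rw [← rightCount_eq_sum_Iic ht hd]
    omega
  · rw [← Fin.sum_Iic_last, ← rightCount_eq_sum_Iic ht hd, ← card_succIf_eq_last,
      card_succIf_eq_one hd, Nat.cast_one]

lemma bijective_iff_rightCount_eq (ht : ∀ j, t j = #{i | col i = j} - 1) (htot : ∑ x, t x = 1) :
    Bijective (fun i => (col i).succIf (d i)) ↔
      ∀ j, (rightCount col d j : ℤ) = ∑ x ∈ Iic j, t x := by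
  refine ⟨rightCount_eq_sum_Iic ht, fun hr => ?_⟩
  rw [bijective_iff_existsUnique]
  intro k
  rw [Fintype.existsUnique_iff_card_one]
  induction k using Fin.cases with
  | zero =>
    have := leftCount_add_rightCount (col := col) d 0
    have := hr 0
    rw [card_succIf_eq_zero]
    rw [Fin.sum_Iic_zero, ht] at this
    omega
  | succ j =>
    induction j using Fin.lastCases with
    | last =>
      have := hr (Fin.last n)
      rw [Fin.sum_Iic_last, htot] at this
      rw [Fin.succ_last, card_succIf_eq_last]
      omega
    | cast i =>
      have := leftCount_add_rightCount (col := col) d i.succ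
      have := hr i.succ
      have := hr i.castSucc
      rw [Fin.sum_Iic_succ, ht] at *
      rw [card_succIf_eq_succ_castSucc]
      omega

lemma exists_sum_Iic_eq_add (hP : ∀ m, ∑ x ∈ Iic m, t x = 0 ∨ ∑ x ∈ Iic m, t x = 1)
    (j : Fin (n + 1)) : ∃ q : ℤ, (q = 0 ∨ q = 1) ∧ ∑ x ∈ Iic j, t x = q + t j := by
  induction j using Fin.cases with
  | zero => exact ⟨0, Or.inl rfl, by rw [Fin.sum_Iic_zero, zero_add]⟩
  | succ i => exact ⟨_, hP i.castSucc, Fin.sum_Iic_succ t i⟩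

lemma prod_choose_eq_two_pow (ht : ∀ j, t j = #{i | col i = j} - 1)
    (hP : ∀ m, ∑ x ∈ Iic m, t x = 0 ∨ ∑ x ∈ Iic m, t x = 1) :
    ∏ j, (#{i | col i = j}).choose (∑ x ∈ Iic j, t x).toNat = 2 ^ #{j | t j = 1} := by
  have key (j : Fin (n + 1)) :
      (#{i | col i = j}).choose (∑ x ∈ Iic j, t x).toNat = if t j = 1 then 2 else 1 := by
    obtain ⟨q, hq, hsum⟩ := exists_sum_Iic_eq_add hP j
    have := ht j
    rcases hP j with h | h <;> rw [h]
    · rw [Int.toNat_zero, Nat.choose_zero_right, if_neg (by omega)]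
    · rw [Int.toNat_one, Nat.choose_one_right]
      split_ifs <;> omega
  rw [prod_congr rfl fun j _ => key j, prod_ite, prod_const, prod_const_one, mul_one]

theorem ncard_bijective_succIf (ht : ∀ j, t j = #{i | col i = j} - 1) :
    {d : κ → Bool | Bijective fun i => (col i).succIf (d i)}.ncard =
      if (∀ m, ∑ x ∈ Iic m, t x = 0 ∨ ∑ x ∈ Iic m, t x = 1) ∧ ∑ x, t x = 1
      then 2 ^ #{j | t j = 1} else 0 := by
  split_ifs with h
  · obtain ⟨hP, htot⟩ := h
    have hset : {d : κ → Bool | Bijective fun i => (col i).succIf (d i)} =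
        {d | ∀ j, rightCount col d j = (∑ x ∈ Iic j, t x).toNat} := by
      ext d
      rw [Set.mem_ofPred_eq, bijective_iff_rightCount_eq ht htot]
      refine forall_congr' fun j => ?_
      have := hP j
      omega
    rw [hset, ncard_rightCount_eq_prod_choose, prod_choose_eq_two_pow ht hP]
  · convert Set.ncard_empty (κ → Bool)
    exact Set.eq_empty_of_forall_notMem fun d hd => h (partialSums_of_bijective ht hd)

end SlotAssignments

namespace GnV

variable {n : ℕ}

def ab : Fin (n + 1) × Bool → GnV n
  | (j, false) => a j
  | (j, true) => b j

def slot : Fin (n + 2) → GnV n := Fin.cases w (Fin.lastCases w' c)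

@[simp] lemma slot_zero : slot 0 = (w : GnV n) := rfl

@[simp] lemma slot_last : slot (Fin.last (n + 1)) = (w' : GnV n) := by
  simp [slot, ← Fin.succ_last]

@[simp] lemma slot_succ_castSucc (i : Fin n) : slot i.castSucc.succ = c i := by
  simp [slot]

lemma ab_injective : Injective (ab (n := n)) := by
  rintro ⟨j, _ | _⟩ ⟨j', _ | _⟩ h <;> simp_all [ab]

lemma slot_injective : Injective (slot (n := n)) := by
  intro k k' h
  rcases k.eq_zero_or_eq_last_or_eq_succ_castSucc with rfl | rfl | ⟨i, rfl⟩ <;>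
  rcases k'.eq_zero_or_eq_last_or_eq_succ_castSucc with rfl | rfl | ⟨i', rfl⟩ <;>
  simp_all

lemma slot_ne_ab (k : Fin (n + 2)) (p : Fin (n + 1) × Bool) : slot k ≠ ab p := by
  rcases k.eq_zero_or_eq_last_or_eq_succ_castSucc with rfl | rfl | ⟨i, rfl⟩ <;>
  rcases p with ⟨j, _ | _⟩ <;> simp [ab]

lemma compl_range_ab : (Set.range ab)ᶜ = Set.range (slot (n := n)) := by
  ext v
  constructor
  · intro hv
    cases v with
    | a j => exact absurd ⟨(j, false), rfl⟩ hv
    | b j => exact absurd ⟨(j, true), rfl⟩ hv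
    | c i => exact ⟨_, slot_succ_castSucc i⟩
    | w => exact ⟨0, rfl⟩
    | w' => exact ⟨_, slot_last⟩
  · rintro ⟨k, rfl⟩ ⟨p, hp⟩
    exact slot_ne_ab k p hp.symm

lemma gnRel_iff {u v : GnV n} :
    GnRel n u v ↔ ∃ p : Fin (n + 1) × Bool, ∃ d, u = slot (p.1.succIf d) ∧ v = ab p := by
  constructor
  · rintro (⟨rfl, rfl | rfl⟩ | ⟨rfl, rfl | rfl⟩ | ⟨i, rfl, rfl | rfl | rfl | rfl⟩)
    · exact ⟨(0, false), false, by simp [Fin.succIf], rfl⟩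
    · exact ⟨(0, true), false, by simp [Fin.succIf], rfl⟩
    · exact ⟨(Fin.last n, false), true, by simp [Fin.succIf], rfl⟩
    · exact ⟨(Fin.last n, true), true, by simp [Fin.succIf], rfl⟩
    · exact ⟨(i.castSucc, false), true, by simp [Fin.succIf], rfl⟩
    · exact ⟨(i.castSucc, true), true, by simp [Fin.succIf], rfl⟩
    · exact ⟨(i.succ, false), false, by simp [Fin.succIf], rfl⟩
    · exact ⟨(i.succ, true), false, by simp [Fin.succIf], rfl⟩
  · rintro ⟨⟨j, x⟩, _ | _, rfl, rfl⟩
    · rcases Fin.eq_zero_or_eq_succ j with rfl | ⟨i, rfl⟩ <;> cases x <;>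
        simp [GnRel, ab, Fin.succIf]
    · rcases Fin.eq_castSucc_or_eq_last j with ⟨i, rfl⟩ | rfl <;> cases x <;>
        simp [GnRel, ab, Fin.succIf]

end GnV

open GnV

section

variable {n : ℕ}

lemma gnGraph_adj_ab_iff (p : Fin (n + 1) × Bool) (v : GnV n) :
    (GnGraph n).Adj (ab p) v ↔ ∃ d, v = slot (p.1.succIf d) := by
  rw [GnGraph, SimpleGraph.fromRel_adj, gnRel_iff, gnRel_iff]
  constructor
  · rintro ⟨-, ⟨p', d, h, -⟩ | ⟨p', d, rfl, h⟩⟩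
    · exact absurd h.symm (slot_ne_ab _ _)
    · exact ⟨d, by rw [ab_injective h]⟩
  · rintro ⟨d, rfl⟩
    exact ⟨(slot_ne_ab _ _).symm, Or.inr ⟨p, d, rfl, rfl⟩⟩

lemma gnGraph_isBipartiteWith :
    (GnGraph n).IsBipartiteWith (Set.range ab) (Set.range ab)ᶜ where
  disjoint := disjoint_compl_right
  mem_of_adj u v huv := by
    rw [GnGraph, SimpleGraph.fromRel_adj, gnRel_iff, gnRel_iff] at huv
    rw [compl_range_ab]
    rcases huv.2 with ⟨p, d, rfl, rfl⟩ | ⟨p, d, rfl, rfl⟩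
    · exact Or.inr ⟨⟨_, rfl⟩, ⟨p, rfl⟩⟩
    · exact Or.inl ⟨⟨p, rfl⟩, ⟨_, rfl⟩⟩

theorem numPM_induce_gnGraph (S : Set (GnV n)) (hS : ∀ k, slot k ∈ S) :
    numPM ((GnGraph n).induce S) =
      {d : {p // ab p ∈ S} → Bool |
        Bijective fun i : {p // ab p ∈ S} => i.1.1.succIf (d i)}.ncard := by
  set e : {p // ab p ∈ S} → S := fun i => ⟨ab i.1, i.2⟩
  have he : Injective e := fun i i' h =>
    Subtype.ext (ab_injective (congrArg Subtype.val h))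
  have hrange : Set.range e = Subtype.val ⁻¹' Set.range ab := Set.ext fun v =>
    ⟨fun ⟨i, hi⟩ => ⟨i.1, congrArg Subtype.val hi⟩,
      fun ⟨p, hp⟩ => ⟨⟨p, hp ▸ v.2⟩, Subtype.ext hp⟩⟩
  have hG : ((GnGraph n).induce S).IsBipartiteWith (Set.range e) (Set.range e)ᶜ :=
    hrange ▸ gnGraph_isBipartiteWith.induce_compl S
  have hslot (v : S) : v ∉ Set.range e ↔ ∃ k, slot k = v.1 := by
    rw [hrange, Set.mem_preimage, ← Set.mem_compl_iff, compl_range_ab, Set.mem_range]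
  let ψ (d : {p // ab p ∈ S} → Bool) (i : {p // ab p ∈ S}) : S :=
    ⟨slot (i.1.1.succIf (d i)), hS _⟩
  have hψ : Injective ψ := fun d d' h => funext fun i =>
    (i.1.1.succIf_injective (slot_injective (congrArg Subtype.val (congrFun h i))))
  have hunique (d : {p // ab p ∈ S} → Bool) : (∀ v ∉ Set.range e, ∃! i, ψ d i = v) ↔
      Bijective fun i : {p // ab p ∈ S} => i.1.1.succIf (d i) := by
    rw [bijective_iff_existsUnique]
    constructor
    · intro h k
      simpa [ψ, Subtype.ext_iff, slot_injective.eq_iff] using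
        h ⟨slot k, hS k⟩ ((hslot _).2 ⟨k, rfl⟩)
    · intro h v hv
      obtain ⟨k, hk⟩ := (hslot v).1 hv
      simpa [ψ, Subtype.ext_iff, ← hk, slot_injective.eq_iff] using h k
  rw [numPM_eq_ncard_of_isBipartiteWith he hG, ← hψ.injOn.ncard_image]
  congr 1
  ext f
  constructor
  · rintro ⟨hadj, huniq⟩
    choose d hd using fun i =>
      (gnGraph_adj_ab_iff i.1 (f i).1).1 (show (GnGraph n).Adj (ab i.1) (f i) from hadj i)
    have hf : ψ d = f := funext fun i => Subtype.ext (hd i).symm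
    exact ⟨d, (hunique d).1 (hf ▸ huniq), hf⟩
  · rintro ⟨d, hd, rfl⟩
    exact ⟨fun i => (gnGraph_adj_ab_iff _ _).2 ⟨d i, rfl⟩, (hunique d).2 hd⟩

lemma card_ab_mem_fiber (S : Set (GnV n)) [Fintype {p // ab p ∈ S}] [DecidablePred (· ∈ S)]
    (j : Fin (n + 1)) :
    #{i : {p // ab p ∈ S} | i.1.1 = j} =
      (if a j ∈ S then 1 else 0) + (if b j ∈ S then 1 else 0) := by
  rw [← card_map (Function.Embedding.subtype _)]
  have : ({i : {p // ab p ∈ S} | i.1.1 = j} : Finset _).map (Function.Embedding.subtype _) =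
      ({x | ab (j, x) ∈ S} : Finset Bool).map (Function.Embedding.sectR j Bool) := by
    ext ⟨j', x⟩
    cases x <;> simp [and_comm, eq_comm] <;> rintro rfl <;> rfl
  rw [this, card_map, card_filter, Fintype.sum_bool, add_comm]
  rfl

end

theorem Gn_matchings_general (n : ℕ)
    (Da Db : Finset (Fin (n + 1)))
    (t : Fin (n + 1) → ℤ)
    (ht : ∀ j, t j = (if j ∈ Da then 0 else 1) + (if j ∈ Db then 0 else 1) - 1) :
    numPM ((GnGraph n).induce
        {v | ¬ ((∃ j ∈ Da, v = GnV.a j) ∨ (∃ j ∈ Db, v = GnV.b j))}) =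
      if (∀ m : Fin (n + 1),
            (∑ x ∈ Finset.Iic m, t x) = 0 ∨ (∑ x ∈ Finset.Iic m, t x) = 1) ∧
          (∑ x, t x) = 1
      then 2 ^ (Finset.univ.filter fun j => t j = 1).card
      else 0 := by
  classical
  rw [numPM_induce_gnGraph _ fun k => ?_, ncard_bijective_succIf fun j => ?_]
  · rw [ht, card_ab_mem_fiber]
    by_cases hda : j ∈ Da <;> by_cases hdb : j ∈ Db <;> simp [hda, hdb]
  · rintro (⟨j, -, h⟩ | ⟨j, -, h⟩)
    · exact slot_ne_ab k (j, false) h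
    · exact slot_ne_ab k (j, true) h

/-- Let `D` be a subset of the distinguished vertices of `Gₙ`, recorded by the index
sets `Da = {j | a j ∈ D}` and `Db = {j | b j ∈ D}`.  With `t j = 1` if neither `a j` nor
`b j` lies in `D`, `t j = −1` if both do, and `t j = 0` if exactly one does, the number
of perfect matchings of `Gₙ − D` is `2^{#{j | t j = 1}}` if every partial sum of
`(t 0, …, t n)` is `0` or `1` and the total sum is `1`, and `0` otherwise. -/
theorem Gn_matchings (n : ℕ) (hn : 1 ≤ n)
    (Da Db : Finset (Fin (n + 1)))
    (t : Fin (n + 1) → ℤ)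
    (ht : ∀ j, t j = (if j ∈ Da then 0 else 1) + (if j ∈ Db then 0 else 1) - 1) :
    numPM ((GnGraph n).induce
        {v | ¬ ((∃ j ∈ Da, v = GnV.a j) ∨ (∃ j ∈ Db, v = GnV.b j))}) =
      if (∀ m : Fin (n + 1),
            (∑ x ∈ Finset.Iic m, t x) = 0 ∨ (∑ x ∈ Finset.Iic m, t x) = 1) ∧
          (∑ x, t x) = 1
      then 2 ^ (Finset.univ.filter fun j => t j = 1).card
      else 0 :=
  Gn_matchings_general n Da Db t ht
end
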